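/- arXiv:2310.04820 — 8 statements merged into one kernel-verified Lean document; each statement's English description precedes it below -/
import Mathlib

section
/- Let m ≥ 1 be an integer, q = 2^m, and let D be the q²×q² matrix over 𝔽_q with rows and columns indexed by 𝔽_q × 𝔽_q and entries D((x₁,x₂),(y₁,y₂)) = (x₁²y₁ + x₁y₁² + x₂ + y₂)^{q−1}. Then rank(D) ≤ N_m, where N_m = Σ_{s=0}^{2^m−1} b_s. -/
/-- `Lessdot l₁ l₂ s` means `l₁ + l₂ ⋖ s`: for every bit position `i`,
the binary digits satisfy `(l₁)ᵢ + (l₂)ᵢ ≤ (s)ᵢ`. -/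
def Lessdot (l₁ l₂ s : ℕ) : Prop :=
  ∀ i : ℕ, (l₁.testBit i).toNat + (l₂.testBit i).toNat ≤ (s.testBit i).toNat

open scoped Classical in
/-- `BSet r s = B_s^{(r)} = {2^r·l₁ + l₂ : l₁ + l₂ ⋖ s}`.
(Note `l₁ + l₂ ⋖ s` forces `l₁, l₂ ≤ s`, so the ranges capture the whole set.) -/
noncomputable def BSet (r s : ℕ) : Finset ℕ :=
  ((Finset.range (s + 1) ×ˢ Finset.range (s + 1)).filter
    (fun p => Lessdot p.1 p.2 s)).image (fun p => 2 ^ r * p.1 + p.2)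

/-- `Nnum r m = N_m^{(r)} = Σ_{s=0}^{2^m−1} |B_s^{(r)}|`. -/
noncomputable def Nnum (r m : ℕ) : ℕ := ∑ s ∈ Finset.range (2 ^ m), (BSet r s).card

/-- For a function `f : Fin m → Fin 4`, the number whose binary digits are the fiber of `c`. -/
def Efun {m : ℕ} (c : Fin 4) (f : Fin m → Fin 4) : ℕ :=
  ∑ t ∈ Finset.univ.filter (fun t => f t = c), 2 ^ (t : ℕ)

/-- The row-monomial exponents attached to `f`. -/
def phi {m : ℕ} (f : Fin m → Fin 4) : ℕ × ℕ := (2 * Efun 0 f + Efun 1 f, Efun 2 f)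

lemma testBit_sum_two_pow (A : Finset ℕ) (i : ℕ) :
    (∑ t ∈ A, 2 ^ t).testBit i = decide (i ∈ A) := by
  induction A using Finset.induction_on_max with
  | empty => simp
  | insert a s ha ih =>
    have hanot : a ∉ s := fun h => lt_irrefl a (ha a h)
    rw [Finset.sum_insert hanot]
    have hlt : ∑ t ∈ s, 2 ^ t < 2 ^ a := Nat.geomSum_lt le_rfl ha
    have hor : 2 ^ a + ∑ t ∈ s, 2 ^ t = 2 ^ a ||| ∑ t ∈ s, 2 ^ t := by
      simpa using Nat.two_pow_add_eq_or_of_lt hlt 1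
    rw [hor, Nat.testBit_or, ih, Nat.testBit_two_pow]
    by_cases h : i = a <;> by_cases h2 : i ∈ s <;> simp [h, h2, Finset.mem_insert, eq_comm]

/-- Expansion of a fourfold sum to the power `2^m - 1` in characteristic two:
`(a₀+a₁+a₂+a₃)^{2^m-1} = ∏_{t<m} Σ_c a_c^{2^t}`, expanded as a sum over
functions `f : Fin m → Fin 4`. -/
lemma expand_pow {F : Type*} [CommSemiring F] [ExpChar F 2] (m : ℕ) (a : Fin 4 → F) :
    (∑ c, a c) ^ (2 ^ m - 1) = ∑ f : Fin m → Fin 4, ∏ c, a c ^ Efun c f := by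
  classical
  have h1 : ∑ t ∈ Finset.range m, 2 ^ t = 2 ^ m - 1 := by
    simpa using Nat.geomSum_eq le_rfl m
  calc (∑ c, a c) ^ (2 ^ m - 1)
      = ∏ t ∈ Finset.range m, (∑ c, a c) ^ 2 ^ t := by
        rw [Finset.prod_pow_eq_pow_sum, h1]
    _ = ∏ t : Fin m, (∑ c, a c) ^ 2 ^ (t : ℕ) := (Fin.prod_univ_eq_prod_range _ m).symm
    _ = ∏ t : Fin m, ∑ c, a c ^ 2 ^ (t : ℕ) := by
        refine Finset.prod_congr rfl fun t _ => ?_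
        exact sum_pow_char_pow 2 (t : ℕ) Finset.univ a
    _ = ∑ f ∈ Fintype.piFinset (fun _ : Fin m => (Finset.univ : Finset (Fin 4))),
          ∏ t : Fin m, a (f t) ^ 2 ^ (t : ℕ) := Finset.prod_univ_sum _ _
    _ = ∑ f : Fin m → Fin 4, ∏ t : Fin m, a (f t) ^ 2 ^ (t : ℕ) := by
        rw [Fintype.piFinset_univ]
    _ = ∑ f : Fin m → Fin 4, ∏ c : Fin 4, a c ^ Efun c f := by
        refine Finset.sum_congr rfl fun f _ => ?_
        rw [← Finset.prod_fiberwise Finset.univ f (fun t => a (f t) ^ 2 ^ (t : ℕ))]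
        refine Finset.prod_congr rfl fun c _ => ?_
        rw [Efun, ← Finset.prod_pow_eq_pow_sum]
        exact Finset.prod_congr rfl fun t ht => by rw [(Finset.mem_filter.mp ht).2]

/-- If `D x y = Σ_i u_{g i}(x) · v_i(y)`, then the rank of `D` is at most the
number of distinct values of `g`. -/
lemma rank_le_card_image {F : Type*} [Field F] {α ι κ : Type*} [Fintype α] [Fintype ι]
    [DecidableEq κ]
    (D : Matrix α α F) (g : ι → κ) (u : κ → α → F) (v : ι → α → F)
    (h : ∀ x y, D x y = ∑ i : ι, u (g i) x * v i y) :
    D.rank ≤ (Finset.image g Finset.univ).card := by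
  classical
  set S : Finset κ := Finset.image g Finset.univ with hS
  let U : Matrix α S F := fun x p => u p x
  let V : Matrix S α F := fun p y => ∑ i ∈ Finset.univ.filter (fun i => g i = (p : κ)), v i y
  have hUV : D = U * V := by
    ext x y
    rw [h, Matrix.mul_apply]
    rw [Finset.sum_coe_sort S
      (fun p => u p x * ∑ i ∈ Finset.univ.filter (fun i => g i = p), v i y)]
    rw [← Finset.sum_fiberwise_of_maps_to
      (fun i (_ : i ∈ Finset.univ) => Finset.mem_image_of_mem g (Finset.mem_univ i))
      (fun i => u (g i) x * v i y)]
    refine Finset.sum_congr rfl fun p _ => ?_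
    rw [Finset.mul_sum]
    refine Finset.sum_congr rfl fun i hi => ?_
    rw [(Finset.mem_filter.mp hi).2]
  rw [hUV]
  calc (U * V).rank ≤ U.rank := Matrix.rank_mul_le_left U V
    _ ≤ Fintype.card S := Matrix.rank_le_card_width U
    _ = S.card := Fintype.card_coe S

/-- Each row-monomial exponent pair `phi f` lies in the union of the `BSet`s. -/
lemma phi_mem {m : ℕ} (f : Fin m → Fin 4) :
    phi f ∈ (Finset.range (2 ^ m)).biUnion
      (fun s => (BSet 1 s).image (fun b => (b, 2 ^ m - 1 - s))) := by
  classical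
  set A : Fin 4 → Finset ℕ :=
    fun c => (Finset.univ.filter (fun t => f t = c)).image Fin.val with hA
  have hEA : ∀ c, Efun c f = ∑ t ∈ A c, 2 ^ t := by
    intro c
    rw [hA, Finset.sum_image (fun x _ y _ h => Fin.val_injective h)]
    rfl
  have hAlt : ∀ c i, i ∈ A c → i < m := by
    intro c i hi
    obtain ⟨t, _, rfl⟩ := Finset.mem_image.mp hi
    exact t.isLt
  have hAdisj : ∀ c c', c ≠ c' → ∀ i, i ∈ A c → i ∉ A c' := by
    intro c c' hcc i hi hi'
    obtain ⟨t, ht, rfl⟩ := Finset.mem_image.mp hi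
    obtain ⟨t', ht', htt⟩ := Finset.mem_image.mp hi'
    have h1 : t' = t := Fin.val_injective htt
    subst h1
    exact hcc (((Finset.mem_filter.mp ht).2).symm.trans (Finset.mem_filter.mp ht').2)
  have hgeom : ∑ t ∈ Finset.range m, 2 ^ t = 2 ^ m - 1 := by
    simpa using Nat.geomSum_eq le_rfl m
  have hA2 : A 2 ⊆ Finset.range m := fun i hi => Finset.mem_range.mpr (hAlt 2 i hi)
  have hsplit : (∑ t ∈ Finset.range m \ A 2, 2 ^ t) + Efun 2 f = 2 ^ m - 1 := by
    rw [hEA 2, Finset.sum_sdiff hA2, hgeom]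
  have hpow : (1 : ℕ) ≤ 2 ^ m := Nat.one_le_two_pow
  have hsub01 : ∀ c, c = 0 ∨ c = 1 → A c ⊆ Finset.range m \ A 2 := by
    rintro c hc i hi
    refine Finset.mem_sdiff.mpr ⟨Finset.mem_range.mpr (hAlt c i hi), ?_⟩
    rcases hc with rfl | rfl
    · exact hAdisj 0 2 (by decide) i hi
    · exact hAdisj 1 2 (by decide) i hi
  have hld : Lessdot (Efun 0 f) (Efun 1 f) (∑ t ∈ Finset.range m \ A 2, 2 ^ t) := by
    intro i
    rw [hEA 0, hEA 1, testBit_sum_two_pow, testBit_sum_two_pow, testBit_sum_two_pow]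
    by_cases h0 : i ∈ A 0 <;> by_cases h1 : i ∈ A 1
    · exact absurd h1 (hAdisj 0 1 (by decide) i h0)
    · have hm0 : i ∈ Finset.range m \ A 2 := hsub01 0 (Or.inl rfl) h0
      simp [h0, h1, hm0]
    · have hm1 : i ∈ Finset.range m \ A 2 := hsub01 1 (Or.inr rfl) h1
      simp [h0, h1, hm1]
    · simp [h0, h1]
  have hle : ∀ c, c = 0 ∨ c = 1 → Efun c f ≤ ∑ t ∈ Finset.range m \ A 2, 2 ^ t := by
    intro c hc
    rw [hEA c]
    exact Finset.sum_le_sum_of_subset (hsub01 c hc)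
  refine Finset.mem_biUnion.mpr
    ⟨∑ t ∈ Finset.range m \ A 2, 2 ^ t, Finset.mem_range.mpr (by omega), ?_⟩
  refine Finset.mem_image.mpr ⟨2 ^ 1 * Efun 0 f + Efun 1 f, ?_, ?_⟩
  · refine Finset.mem_image.mpr ⟨(Efun 0 f, Efun 1 f), Finset.mem_filter.mpr
      ⟨Finset.mem_product.mpr ⟨?_, ?_⟩, hld⟩, rfl⟩
    · exact Finset.mem_range.mpr (Nat.lt_succ_of_le (hle 0 (Or.inl rfl)))
    · exact Finset.mem_range.mpr (Nat.lt_succ_of_le (hle 1 (Or.inr rfl)))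
  · have h2 : 2 ^ m - 1 - (∑ t ∈ Finset.range m \ A 2, 2 ^ t) = Efun 2 f := by omega
    rw [h2]
    show (2 ^ 1 * Efun 0 f + Efun 1 f, Efun 2 f) = phi f
    norm_num [phi]

/-- For `q = 2^m`, the matrix `D` over `𝔽_q` indexed by `𝔽_q × 𝔽_q` with
entries `D((x₁,x₂),(y₁,y₂)) = (x₁²y₁ + x₁y₁² + x₂ + y₂)^{q−1}` satisfies
`rank(D) ≤ N_m = Σ_{s=0}^{2^m−1} b_s` where `B_s = {2·l₁ + l₂ : l₁ + l₂ ⋖ s}`. -/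
theorem stmt_1 (m : ℕ) (hm : 1 ≤ m) (F : Type) [Field F] [Fintype F] [DecidableEq F]
    (hF : Fintype.card F = 2 ^ m)
    (D : Matrix (F × F) (F × F) F)
    (hD : ∀ x y : F × F, D x y =
      (x.1 ^ 2 * y.1 + x.1 * y.1 ^ 2 + x.2 + y.2) ^ (2 ^ m - 1)) :
    D.rank ≤ Nnum 1 m := by
  classical
  have hchar : CharP F 2 := by
    obtain ⟨p, hp⟩ := CharP.exists F
    haveI := hp
    obtain ⟨n, hpprime, hcard⟩ := FiniteField.card F p
    have hdvd : p ∣ 2 := by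
      refine hpprime.dvd_of_dvd_pow (n := m) ?_
      rw [← hF, hcard]
      exact dvd_pow_self p n.pos.ne'
    have hp2 : p = 2 := (Nat.prime_dvd_prime_iff_eq hpprime Nat.prime_two).mp hdvd
    rwa [hp2] at hp
  haveI := hchar
  haveI : ExpChar F 2 := ExpChar.prime Nat.prime_two
  have hexp : ∀ x y : F × F, D x y = ∑ f : Fin m → Fin 4,
      (x.1 ^ (phi f).1 * x.2 ^ (phi f).2) *
        (y.1 ^ (Efun 0 f + 2 * Efun 1 f) * y.2 ^ Efun 3 f) := by
    intro x y
    rw [hD]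
    have hsum4 : x.1 ^ 2 * y.1 + x.1 * y.1 ^ 2 + x.2 + y.2
        = ∑ c, (![x.1 ^ 2 * y.1, x.1 * y.1 ^ 2, x.2, y.2]) c := by
      simp [Fin.sum_univ_four]
    rw [hsum4, expand_pow m]
    refine Finset.sum_congr rfl fun f _ => ?_
    simp only [Fin.prod_univ_four, Matrix.cons_val_zero, Matrix.cons_val_one, Matrix.head_cons,
      Matrix.cons_val_two, Matrix.tail_cons, Matrix.cons_val_three, phi]
    ring
  have h1 : D.rank ≤ (Finset.image (phi (m := m)) Finset.univ).card :=
    rank_le_card_image D phi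
      (fun p x => x.1 ^ p.1 * x.2 ^ p.2)
      (fun f y => y.1 ^ (Efun 0 f + 2 * Efun 1 f) * y.2 ^ Efun 3 f) hexp
  have hsub : Finset.image (phi (m := m)) Finset.univ ⊆
      (Finset.range (2 ^ m)).biUnion
        (fun s => (BSet 1 s).image (fun b => (b, 2 ^ m - 1 - s))) := by
    intro p hp
    obtain ⟨f, _, rfl⟩ := Finset.mem_image.mp hp
    exact phi_mem f
  calc D.rank ≤ (Finset.image (phi (m := m)) Finset.univ).card := h1
    _ ≤ ((Finset.range (2 ^ m)).biUnion
        (fun s => (BSet 1 s).image (fun b => (b, 2 ^ m - 1 - s)))).card :=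
      Finset.card_le_card hsub
    _ ≤ ∑ s ∈ Finset.range (2 ^ m), ((BSet 1 s).image (fun b => (b, 2 ^ m - 1 - s))).card :=
      Finset.card_biUnion_le
    _ ≤ ∑ s ∈ Finset.range (2 ^ m), (BSet 1 s).card :=
      Finset.sum_le_sum fun s _ => Finset.card_image_le
    _ = Nnum 1 m := rfl
end

section
/- Let r ≥ 1 and k ≥ 0 be integers and let s₁, s₂ be natural numbers with s₂ < 2^k. Then B^{(r)}_{s₁·2^k + s₂} = {u·2^k + v : u ∈ B^{(r)}_{s₁}, v ∈ B^{(r)}_{s₂}}. -/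
lemma Lessdot.le_left {l₁ l₂ s : ℕ} (h : Lessdot l₁ l₂ s) : l₁ ≤ s := by
  refine Nat.le_of_testBit fun i hi => ?_
  have := h i
  rw [hi] at this
  by_contra hs
  simp [Bool.not_eq_true] at hs
  simp [hs] at this

lemma Lessdot.le_right {l₁ l₂ s : ℕ} (h : Lessdot l₁ l₂ s) : l₂ ≤ s := by
  refine Nat.le_of_testBit fun i hi => ?_
  have := h i
  rw [hi] at this
  by_contra hs
  simp [Bool.not_eq_true] at hs
  simp [hs] at this

lemma mem_BSet {r s n : ℕ} :
    n ∈ BSet r s ↔ ∃ l₁ l₂, Lessdot l₁ l₂ s ∧ n = 2 ^ r * l₁ + l₂ := by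
  classical
  simp only [BSet, Finset.mem_image, Finset.mem_filter, Finset.mem_product,
    Finset.mem_range, Nat.lt_succ_iff, Prod.exists]
  constructor
  · rintro ⟨a, b, ⟨⟨_, _⟩, hab⟩, rfl⟩
    exact ⟨a, b, hab, rfl⟩
  · rintro ⟨a, b, hab, rfl⟩
    exact ⟨a, b, ⟨⟨hab.le_left, hab.le_right⟩, hab⟩, rfl⟩

lemma testBit_combine {b k : ℕ} (a : ℕ) (hb : b < 2 ^ k) (i : ℕ) :
    (a * 2 ^ k + b).testBit i = if i < k then b.testBit i else a.testBit (i - k) := by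
  rw [mul_comm, Nat.testBit_two_pow_mul_add a hb]

/-- For `r ≥ 1`, `k ≥ 0` and `s₂ < 2^k`,
`B^{(r)}_{s₁·2^k + s₂} = {u·2^k + v : u ∈ B^{(r)}_{s₁}, v ∈ B^{(r)}_{s₂}}`. -/
theorem stmt_3 (r k : ℕ) (hr : 1 ≤ r) (s₁ s₂ : ℕ) (hs₂ : s₂ < 2 ^ k) :
    BSet r (s₁ * 2 ^ k + s₂) =
      (BSet r s₁ ×ˢ BSet r s₂).image (fun p => p.1 * 2 ^ k + p.2) := by
  ext n
  simp only [mem_BSet, Finset.mem_image, Finset.mem_product, Prod.exists]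
  constructor
  · rintro ⟨l₁, l₂, hld, rfl⟩
    have h2k : 0 < 2 ^ k := Nat.pow_pos (by norm_num)
    obtain ⟨a₁, b₁, hb₁, hl₁⟩ : ∃ a b, b < 2 ^ k ∧ l₁ = a * 2 ^ k + b :=
      ⟨l₁ / 2 ^ k, l₁ % 2 ^ k, Nat.mod_lt _ h2k, by rw [mul_comm]; exact (Nat.div_add_mod l₁ (2 ^ k)).symm⟩
    obtain ⟨a₂, b₂, hb₂, hl₂⟩ : ∃ a b, b < 2 ^ k ∧ l₂ = a * 2 ^ k + b :=
      ⟨l₂ / 2 ^ k, l₂ % 2 ^ k, Nat.mod_lt _ h2k, by rw [mul_comm]; exact (Nat.div_add_mod l₂ (2 ^ k)).symm⟩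
    subst hl₁ hl₂
    refine ⟨2 ^ r * a₁ + a₂, 2 ^ r * b₁ + b₂, ⟨⟨a₁, a₂, ?_, rfl⟩, ⟨b₁, b₂, ?_, rfl⟩⟩, by ring⟩
    · intro i
      have := hld (i + k)
      rwa [testBit_combine a₁ hb₁, testBit_combine a₂ hb₂, testBit_combine s₁ hs₂,
        if_neg (by omega), if_neg (by omega), if_neg (by omega),
        Nat.add_sub_cancel] at this
    · intro i
      by_cases hik : i < k
      · have := hld i
        rwa [testBit_combine a₁ hb₁, testBit_combine a₂ hb₂, testBit_combine s₁ hs₂,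
          if_pos hik, if_pos hik, if_pos hik] at this
      · have h1 : b₁.testBit i = false :=
          Nat.testBit_lt_two_pow (lt_of_lt_of_le hb₁ (Nat.pow_le_pow_right (by norm_num) (by omega)))
        have h2 : b₂.testBit i = false :=
          Nat.testBit_lt_two_pow (lt_of_lt_of_le hb₂ (Nat.pow_le_pow_right (by norm_num) (by omega)))
        simp [h1, h2]
  · rintro ⟨u, v, ⟨⟨a₁, a₂, ha, rfl⟩, ⟨b₁, b₂, hb, rfl⟩⟩, rfl⟩
    have hb₁ : b₁ < 2 ^ k := lt_of_le_of_lt hb.le_left hs₂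
    have hb₂ : b₂ < 2 ^ k := lt_of_le_of_lt hb.le_right hs₂
    refine ⟨a₁ * 2 ^ k + b₁, a₂ * 2 ^ k + b₂, ?_, by ring⟩
    intro i
    rw [testBit_combine a₁ hb₁, testBit_combine a₂ hb₂, testBit_combine s₁ hs₂]
    by_cases hik : i < k
    · simp only [if_pos hik]; exact hb i
    · simp only [if_neg hik]; exact ha (i - k)
end

section
/- Let m ≥ 1 be an integer and let 𝔽_q be the finite field with q = 2^m elements. If a, b, c are pairwise distinct nonzero elements of 𝔽_q with a + b + c = 0, then a³ + b³ + c³ ≠ 0. -/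
theorem cube_add_cube_add_cube_of_add_eq_zero {R : Type*} [CommRing R] {a b c : R}
    (h : a + b + c = 0) : a ^ 3 + b ^ 3 + c ^ 3 = 3 * a * b * c := by
  linear_combination (a ^ 2 + b ^ 2 + c ^ 2 - a * b - a * c - b * c) * h

theorem FiniteField.two_eq_zero_of_card_eq_two_pow {F : Type*} [Field F] [Fintype F] {m : ℕ}
    (hm : 0 < m) (hF : Fintype.card F = 2 ^ m) : (2 : F) = 0 := by
  have hcard := FiniteField.cast_card_eq_zero F
  rw [hF, Nat.cast_pow, Nat.cast_ofNat] at hcard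
  exact pow_eq_zero_iff hm.ne' |>.mp hcard

theorem stmt_9_general (m : ℕ) (hm : 1 ≤ m) (F : Type) [Field F] [Fintype F]
    (hF : Fintype.card F = 2 ^ m)
    (a b c : F) (ha : a ≠ 0) (hb : b ≠ 0) (hc : c ≠ 0)
    (hsum : a + b + c = 0) :
    a ^ 3 + b ^ 3 + c ^ 3 ≠ 0 := by
  have hthree : (3 : F) = 1 := by
    linear_combination FiniteField.two_eq_zero_of_card_eq_two_pow hm hF
  rw [cube_add_cube_add_cube_of_add_eq_zero hsum, hthree, one_mul]
  exact mul_ne_zero (mul_ne_zero ha hb) hc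

/-- In the finite field `𝔽_q` with `q = 2^m` elements, if `a, b, c` are
pairwise distinct nonzero elements with `a + b + c = 0`, then `a³ + b³ + c³ ≠ 0`. -/
theorem stmt_9 (m : ℕ) (hm : 1 ≤ m) (F : Type) [Field F] [Fintype F]
    (hF : Fintype.card F = 2 ^ m)
    (a b c : F) (ha : a ≠ 0) (hb : b ≠ 0) (hc : c ≠ 0)
    (hab : a ≠ b) (hac : a ≠ c) (hbc : b ≠ c)
    (hsum : a + b + c = 0) :
    a ^ 3 + b ^ 3 + c ^ 3 ≠ 0 :=
  stmt_9_general m hm F hF a b c ha hb hc hsum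
end

section
/- Let m ≥ 1 and n be integers with n odd, n > 1, and (n−1)² < 2^m, and let q = 2^m. Let α be a generator of the multiplicative group 𝔽_q^×. Then the 2m vectors (α^k, α^{nk}) ∈ 𝔽_q × 𝔽_q, for k = 0, 1, …, 2m−1, are linearly independent over the prime field 𝔽₂; that is, if c₀, …, c_{2m−1} ∈ 𝔽₂ satisfy Σ_{k=0}^{2m−1} c_k·α^k = 0 and Σ_{k=0}^{2m−1} c_k·α^{nk} = 0, then all c_k = 0. -/
private lemma one_modeq (m : ℕ) : (1:ℕ) ≡ 2 ^ m [MOD 2 ^ m - 1] :=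
  (Nat.modEq_iff_dvd' Nat.one_le_two_pow).mpr dvd_rfl

private lemma pow_two_modeq (m a : ℕ) :
    (2:ℕ) ^ a ≡ 2 ^ (a % m) [MOD 2 ^ m - 1] := by
  conv_lhs => rw [← Nat.div_add_mod a m]
  rw [pow_add, pow_mul]
  calc ((2:ℕ)^m)^(a/m) * 2^(a%m) ≡ 1^(a/m) * 2^(a%m) [MOD 2^m-1] :=
        Nat.ModEq.mul_right _ (((one_modeq m).symm).pow _)
  _ = 2^(a%m) := by rw [one_pow, one_mul]

private lemma aux_nat (a b P : ℕ) (ha : 2 ≤ a) (hb : 1 ≤ b)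
    (hAP : a * a < P) (hBP : (b + 1) * (b + 1) ≤ P) : (a + 1) * b + 1 < P := by
  rcases eq_or_ne a b with hab | hab
  · nlinarith [hab]
  · have h1 : 2 * (a * b) + 1 ≤ a * a + b * b := by
      rcases Nat.lt_or_ge a b with h | h
      · obtain ⟨d, rfl⟩ : ∃ d, b = a + d + 1 := ⟨b - a - 1, by omega⟩
        nlinarith
      · have h' : b < a := by omega
        obtain ⟨d, rfl⟩ : ∃ d, a = b + d + 1 := ⟨a - b - 1, by omega⟩
        nlinarith
    nlinarith

private lemma aux_bound (m n s : ℕ) (hn3 : 3 ≤ n) (hs1 : 1 ≤ s) (hs : 2 * s ≤ m)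
    (hsize : (n - 1) ^ 2 < 2 ^ m) : n * (2 ^ s - 1) < 2 ^ m - 1 := by
  have hb1 : 1 ≤ (2:ℕ) ^ s := Nat.one_le_two_pow
  have h2s : (2:ℕ) ^ s * 2 ^ s ≤ 2 ^ m := by
    rw [← pow_add]; exact Nat.pow_le_pow_right (by norm_num) (by omega)
  have hsize' : (n - 1) * (n - 1) < 2 ^ m := by rwa [pow_two] at hsize
  have hs2 : 2 ≤ (2:ℕ) ^ s := by
    calc (2:ℕ) = 2 ^ 1 := (pow_one 2).symm
    _ ≤ 2 ^ s := Nat.pow_le_pow_right (by norm_num) hs1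
  have key := aux_nat (n - 1) (2 ^ s - 1) (2 ^ m) (by omega) (by omega)
    hsize' (by rw [Nat.sub_add_cancel hb1]; exact h2s)
  rw [show n - 1 + 1 = n by omega] at key
  exact lt_tsub_iff_right.mpr key

private lemma n_lt_Q (m n : ℕ) (hm3 : 3 ≤ m) (hn3 : 3 ≤ n)
    (hsize : (n - 1) ^ 2 < 2 ^ m) : n < 2 ^ m - 1 ∧ 2 ^ (m - 1) < 2 ^ m - 1 := by
  have e1 : (2:ℕ) ^ m = 2 ^ (m - 1) * 2 := by
    rw [← pow_succ]; congr 1; omega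
  have hp4 : 4 ≤ (2:ℕ) ^ (m - 1) := by
    calc (4:ℕ) = 2 ^ 2 := by norm_num
    _ ≤ 2 ^ (m - 1) := Nat.pow_le_pow_right (by norm_num) (by omega)
  have hsize' : (n - 1) * (n - 1) < 2 ^ m := by rwa [pow_two] at hsize
  have h2a : 2 * (n - 1) ≤ (n - 1) * (n - 1) := Nat.mul_le_mul_right _ (by omega)
  omega

/-- L3: cross case -/
private lemma cross_case (m n : ℕ) (hm3 : 3 ≤ m) (hn3 : 3 ≤ n) (hodd : Odd n)
    (hsize : (n - 1) ^ 2 < 2 ^ m) :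
    ∀ i j, i < m → j < m → ¬ (n * 2 ^ i ≡ 2 ^ j [MOD 2 ^ m - 1]) := by
  intro i j hi hj h
  obtain ⟨hnQ, hmQ⟩ := n_lt_Q m n hm3 hn3 hsize
  have h2 : n * 2 ^ i * 2 ^ (m - i) ≡ 2 ^ j * 2 ^ (m - i) [MOD 2 ^ m - 1] :=
    h.mul_right _
  have e2 : n * 2 ^ i * 2 ^ (m - i) = n * 2 ^ m := by
    rw [mul_assoc, ← pow_add]; congr 2; omega
  have e3 : (2:ℕ) ^ j * 2 ^ (m - i) = 2 ^ (j + (m - i)) := (pow_add 2 j (m - i)).symm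
  rw [e2, e3] at h2
  set t := (j + (m - i)) % m with ht
  have htm : t < m := Nat.mod_lt _ (by omega)
  have h4 : n ≡ 2 ^ t [MOD 2 ^ m - 1] := by
    calc n = n * 1 := (mul_one n).symm
    _ ≡ n * 2 ^ m [MOD 2 ^ m - 1] := Nat.ModEq.mul_left n (one_modeq m)
    _ ≡ 2 ^ (j + (m - i)) [MOD 2 ^ m - 1] := h2
    _ ≡ 2 ^ t [MOD 2 ^ m - 1] := pow_two_modeq m _
  have h2t : (2:ℕ) ^ t ≤ 2 ^ (m - 1) := Nat.pow_le_pow_right (by norm_num) (by omega)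
  have hteq : n = 2 ^ t := by
    have h5 : n % (2 ^ m - 1) = 2 ^ t % (2 ^ m - 1) := h4
    rwa [Nat.mod_eq_of_lt hnQ, Nat.mod_eq_of_lt (by omega)] at h5
  rcases Nat.eq_zero_or_pos t with ht0 | ht1
  · rw [ht0, pow_zero] at hteq; omega
  · have e : (2:ℕ) ^ t = 2 * 2 ^ (t - 1) := by
      rw [← pow_succ']; congr 1; omega
    have := Nat.odd_iff.mp hodd
    omega

/-- L2: same family, n-scaled -/
private lemma same_case (m n : ℕ) (hm3 : 3 ≤ m) (hn3 : 3 ≤ n)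
    (hsize : (n - 1) ^ 2 < 2 ^ m) :
    ∀ i j, i < m → j < m → n * 2 ^ i ≡ n * 2 ^ j [MOD 2 ^ m - 1] → i = j := by
  intro i j hi hj h
  by_contra hne
  wlog hij : i < j generalizing i j
  · exact this j i hj hi h.symm (Ne.symm hne) (by omega)
  set Q := 2 ^ m - 1 with hQ
  set s := j - i with hs
  have hs1 : 1 ≤ s := by omega
  have hsm : s ≤ m - 1 := by omega
  have h2 : n ≡ n * 2 ^ s [MOD Q] := by
    calc n = n * 1 := (mul_one n).symm
    _ ≡ n * 2 ^ m [MOD Q] := Nat.ModEq.mul_left n (one_modeq m)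
    _ = n * 2 ^ i * 2 ^ (m - i) := by rw [mul_assoc, ← pow_add]; congr 2; omega
    _ ≡ n * 2 ^ j * 2 ^ (m - i) [MOD Q] := h.mul_right _
    _ = n * 2 ^ s * 2 ^ m := by rw [mul_assoc, mul_assoc, ← pow_add, ← pow_add]; congr 2; omega
    _ ≡ n * 2 ^ s * 1 [MOD Q] := Nat.ModEq.mul_left _ (one_modeq m).symm
    _ = n * 2 ^ s := mul_one _
  have h3 : n ≡ n * 2 ^ (m - s) [MOD Q] := by
    have b1 : n * 2 ^ (m - s) ≡ n * 2 ^ s * 2 ^ (m - s) [MOD Q] := h2.mul_right _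
    have e4 : n * 2 ^ s * 2 ^ (m - s) = n * 2 ^ m := by
      rw [mul_assoc, ← pow_add]; congr 2; omega
    rw [e4] at b1
    calc n = n * 1 := (mul_one n).symm
    _ ≡ n * 2 ^ m [MOD Q] := Nat.ModEq.mul_left n (one_modeq m)
    _ ≡ n * 2 ^ (m - s) [MOD Q] := b1.symm
  set u := min s (m - s) with hu'
  have hu : n ≡ n * 2 ^ u [MOD Q] := by
    rcases le_total s (m - s) with h' | h'
    · rw [hu', min_eq_left h']; exact h2
    · rw [hu', min_eq_right h']; exact h3
  have hu1 : 1 ≤ u := by omega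
  have h2u : 2 * u ≤ m := by omega
  have hdvd : Q ∣ n * 2 ^ u - n :=
    (Nat.modEq_iff_dvd' (Nat.le_mul_of_pos_right n (by positivity))).mp hu
  have e5 : n * (2 ^ u - 1) = n * 2 ^ u - n := by
    rw [Nat.mul_sub, mul_one]
  have hpos : 0 < n * (2 ^ u - 1) := by
    have : 2 ≤ (2:ℕ) ^ u := by
      calc (2:ℕ) = 2 ^ 1 := (pow_one 2).symm
      _ ≤ 2 ^ u := Nat.pow_le_pow_right (by norm_num) hu1
    have : 1 ≤ (2:ℕ) ^ u - 1 := by omega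
    positivity
  have hle : Q ≤ n * (2 ^ u - 1) := Nat.le_of_dvd hpos (e5 ▸ hdvd)
  have hlt := aux_bound m n u hn3 hu1 h2u hsize
  omega



/-- Let `m ≥ 1` and `n` odd with `n > 1` and `(n−1)² < 2^m`
(equivalently `2^{m/2} + 1 > n`), let `𝔽_q` be the finite field with `q = 2^m`
elements and `α` a generator of `𝔽_q^×`. Then the `2m` vectors `(α^k, α^{nk})`,
`k = 0, …, 2m−1`, are linearly independent over `𝔽₂`: if coefficients
`c₀, …, c_{2m−1} ∈ {0, 1} ⊆ 𝔽_q` (the prime field `𝔽₂`) satisfy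
`Σ c_k·α^k = 0` and `Σ c_k·α^{nk} = 0`, then all `c_k = 0`. -/
theorem stmt_10 (m n : ℕ) (hm : 1 ≤ m) (hn : 1 < n) (hodd : Odd n)
    (hsize : (n - 1) ^ 2 < 2 ^ m)
    (F : Type) [Field F] [Fintype F] (hF : Fintype.card F = 2 ^ m)
    (α : F) (hα0 : α ≠ 0) (hgen : ∀ x : F, x ≠ 0 → ∃ k : ℕ, x = α ^ k)
    (c : Fin (2 * m) → F) (hc : ∀ k, c k = 0 ∨ c k = 1)
    (h1 : ∑ k : Fin (2 * m), c k * α ^ (k : ℕ) = 0)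
    (h2 : ∑ k : Fin (2 * m), c k * α ^ (n * (k : ℕ)) = 0) :
    ∀ k, c k = 0 := by
  classical
  have hn3 : 3 ≤ n := by
    rcases hodd with ⟨t, ht⟩; omega
  have hm3 : 3 ≤ m := by
    by_contra hmc
    push_neg at hmc
    have h4 : 2 * 2 ≤ (n - 1) * (n - 1) :=
      Nat.mul_le_mul (show 2 ≤ n - 1 by omega) (show 2 ≤ n - 1 by omega)
    have hsize' : (n - 1) * (n - 1) < 2 ^ m := by rwa [pow_two] at hsize
    have hle4 : (2:ℕ) ^ m ≤ 4 := by
      calc (2:ℕ) ^ m ≤ 2 ^ 2 := Nat.pow_le_pow_right (by norm_num) (by omega)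
      _ = 4 := by norm_num
    omega
  obtain ⟨hnQ, hmQ⟩ := n_lt_Q m n hm3 hn3 hsize
  -- characteristic 2
  haveI hp2 : CharP F 2 := by
    haveI := ringChar.charP F
    obtain ⟨n0, hp, hcard⟩ := FiniteField.card F (ringChar F)
    have hdvd : ringChar F ∣ 2 ^ m := by
      rw [← hF, hcard]; exact dvd_pow_self _ n0.pos.ne'
    have h2c : ringChar F = 2 :=
      (Nat.prime_dvd_prime_iff_eq hp Nat.prime_two).mp (hp.dvd_of_dvd_pow hdvd)
    rw [← h2c]; exact ringChar.charP F
  haveI hexp : ExpChar F 2 := ExpChar.prime Nat.prime_two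
  -- order of α is 2^m - 1
  have hcardu : Nat.card Fˣ = 2 ^ m - 1 := by
    rw [Nat.card_eq_fintype_card, Fintype.card_units, hF]
  set u : Fˣ := Units.mk0 α hα0 with hu
  have hmem : ∀ x : Fˣ, x ∈ Subgroup.zpowers u := by
    intro x
    obtain ⟨k, hk⟩ := hgen (x : F) (Units.ne_zero x)
    refine Subgroup.mem_zpowers_iff.mpr ⟨(k : ℤ), ?_⟩
    rw [zpow_natCast]
    exact Units.ext (by rw [Units.val_pow_eq_pow_val]; simp [hu, hk.symm])
  have hord : orderOf u = 2 ^ m - 1 := by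
    rw [orderOf_eq_card_of_forall_mem_zpowers hmem, hcardu]
  have hpow_iff : ∀ a b : ℕ, α ^ a = α ^ b ↔ a ≡ b [MOD 2 ^ m - 1] := by
    intro a b
    rw [← hord, ← pow_eq_pow_iff_modEq]
    constructor
    · intro h
      exact Units.ext (by
        rw [Units.val_pow_eq_pow_val, Units.val_pow_eq_pow_val]
        simpa [hu] using h)
    · intro h
      have := congrArg Units.val h
      rwa [Units.val_pow_eq_pow_val, Units.val_pow_eq_pow_val, hu, Units.val_mk0] at this
  -- Frobenius: all conjugates are roots
  have hckpow : ∀ (k : Fin (2 * m)) (e : ℕ), c k ^ 2 ^ e = c k := by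
    intro k e
    rcases hc k with h | h <;> rw [h]
    · exact zero_pow (by positivity)
    · exact one_pow _
  have hroot : ∀ e j : ℕ, (∑ k : Fin (2 * m), c k * α ^ (e * (k : ℕ))) = 0 →
      ∑ k : Fin (2 * m), c k * (α ^ (e * 2 ^ j)) ^ (k : ℕ) = 0 := by
    intro e j h
    have hfr := congrArg (· ^ (2 : ℕ) ^ j) h
    rw [sum_pow_char_pow, zero_pow (show (2:ℕ) ^ j ≠ 0 by positivity)] at hfr
    rw [← hfr]
    apply Finset.sum_congr rfl
    intro k _
    rw [mul_pow, hckpow k j, ← pow_mul, ← pow_mul,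
      show e * 2 ^ j * (k : ℕ) = e * (k : ℕ) * 2 ^ j by ring]
  have h1' : ∑ k : Fin (2 * m), c k * α ^ (1 * (k : ℕ)) = 0 := by simpa using h1
  -- the 2m candidate roots
  set v : Fin (2 * m) → F :=
    fun k => if (k : ℕ) < m then α ^ (2 ^ (k : ℕ)) else α ^ (n * 2 ^ ((k : ℕ) - m)) with hv
  have hveval : ∀ k, ∑ l : Fin (2 * m), c l * v k ^ (l : ℕ) = 0 := by
    intro k
    by_cases hk : (k : ℕ) < m
    · rw [hv]; simp only [hk, if_true]
      have := hroot 1 (k : ℕ) h1'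
      simpa using this
    · rw [hv]; simp only [hk, if_false]
      exact hroot n ((k : ℕ) - m) h2
  have hvinj : Function.Injective v := by
    intro k l hkl
    have hk2m : (k : ℕ) < 2 * m := k.isLt
    have hl2m : (l : ℕ) < 2 * m := l.isLt
    rw [hv] at hkl
    simp only at hkl
    by_cases hk : (k : ℕ) < m <;> by_cases hl : (l : ℕ) < m <;>
      simp only [hk, hl, if_true, if_false] at hkl
    · -- both small: 2^k ≡ 2^l
      have hme := (hpow_iff _ _).mp hkl
      have h2k : (2:ℕ) ^ (k : ℕ) ≤ 2 ^ (m - 1) := Nat.pow_le_pow_right (by norm_num) (by omega)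
      have h2l : (2:ℕ) ^ (l : ℕ) ≤ 2 ^ (m - 1) := Nat.pow_le_pow_right (by norm_num) (by omega)
      have heq : (2:ℕ) ^ (k : ℕ) = 2 ^ (l : ℕ) := by
        have h5 : (2:ℕ) ^ (k : ℕ) % (2 ^ m - 1) = 2 ^ (l : ℕ) % (2 ^ m - 1) := hme
        rwa [Nat.mod_eq_of_lt (by omega), Nat.mod_eq_of_lt (by omega)] at h5
      exact Fin.ext (Nat.pow_right_injective (le_refl 2) heq)
    · -- k small, l large: n * 2^(l-m) ≡ 2^k
      exact absurd ((hpow_iff _ _).mp hkl).symm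
        (cross_case m n hm3 hn3 hodd hsize ((l : ℕ) - m) (k : ℕ) (by omega) hk)
    · -- k large, l small
      exact absurd ((hpow_iff _ _).mp hkl)
        (cross_case m n hm3 hn3 hodd hsize ((k : ℕ) - m) (l : ℕ) (by omega) hl)
    · -- both large
      have hme := (hpow_iff _ _).mp hkl
      have := same_case m n hm3 hn3 hsize ((k : ℕ) - m) ((l : ℕ) - m)
        (by omega) (by omega) hme
      exact Fin.ext (by omega)
  -- conclude via a root-count argument
  by_contra hcon
  push_neg at hcon
  obtain ⟨k₀, hk₀⟩ := hcon
  set f : Polynomial F := ∑ k : Fin (2 * m), Polynomial.C (c k) * Polynomial.X ^ (k : ℕ)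
    with hfdef
  have heval : ∀ x : F, f.eval x = ∑ k : Fin (2 * m), c k * x ^ (k : ℕ) := by
    intro x; rw [hfdef, Polynomial.eval_finset_sum]; simp
  have hf0 : f ≠ 0 := by
    intro h0
    have hco : f.coeff (k₀ : ℕ) = c k₀ := by
      rw [hfdef, Polynomial.finset_sum_coeff]
      rw [Finset.sum_eq_single k₀]
      · simp [Polynomial.coeff_C_mul, Polynomial.coeff_X_pow]
      · intro b _ hb
        have hbne : (b : ℕ) ≠ (k₀ : ℕ) := fun hh => hb (Fin.ext hh)
        simp [Polynomial.coeff_C_mul, Polynomial.coeff_X_pow, hbne, Ne.symm hbne]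
      · intro h; exact absurd (Finset.mem_univ k₀) h
    rw [h0] at hco
    simp only [Polynomial.coeff_zero] at hco
    exact hk₀ hco.symm
  have hdeg : f.natDegree ≤ 2 * m - 1 := by
    rw [hfdef]
    apply Polynomial.natDegree_sum_le_of_forall_le
    intro k _
    calc (Polynomial.C (c k) * Polynomial.X ^ (k : ℕ)).natDegree
        ≤ (Polynomial.X ^ (k : ℕ) : Polynomial F).natDegree :=
          Polynomial.natDegree_C_mul_le _ _
    _ = (k : ℕ) := Polynomial.natDegree_X_pow _
    _ ≤ 2 * m - 1 := by omega
  have hroots : ∀ k : Fin (2 * m), v k ∈ f.roots := by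
    intro k
    rw [Polynomial.mem_roots hf0]
    rw [Polynomial.IsRoot, heval]
    exact hveval k
  have hsub : Finset.image v Finset.univ ⊆ f.roots.toFinset := by
    intro x hx
    obtain ⟨k, _, rfl⟩ := Finset.mem_image.mp hx
    exact Multiset.mem_toFinset.mpr (hroots k)
  have hcount : 2 * m ≤ f.natDegree := by
    calc 2 * m = (Finset.image v Finset.univ).card := by
          rw [Finset.card_image_of_injective _ hvinj, Finset.card_univ, Fintype.card_fin]
    _ ≤ f.roots.toFinset.card := Finset.card_le_card hsub
    _ ≤ Multiset.card f.roots := Multiset.toFinset_card_le _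
    _ ≤ f.natDegree := Polynomial.card_roots' f
  omega
end

section
/- Let r ≥ 2 and m ≥ 1 be integers and let 𝔽_q be the finite field with q = 2^m elements. Then every x ∈ 𝔽_q satisfying (x+1)^{2^r−1} = x^{2^r−1} + 1 is equal to 0 or 1 if and only if gcd(r−1, m) = 1. -/
/-- If `a ∣ b` then `2^a - 1 ∣ 2^b - 1`. -/
lemma aux_pow_sub_one_dvd {a b : ℕ} (h : a ∣ b) : 2 ^ a - 1 ∣ 2 ^ b - 1 := by
  obtain ⟨c, rfl⟩ := h
  have := Nat.sub_dvd_pow_sub_pow (2 ^ a) 1 c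
  simpa [← pow_mul] using this

/-- If `a` and `b` are coprime (with `b ≥ 1`) then `2^a-1` and `2^b-1` are coprime. -/
lemma aux_coprime_pow_sub_one {a b : ℕ} (hb : 1 ≤ b) (h : Nat.Coprime a b) :
    Nat.Coprime (2 ^ a - 1) (2 ^ b - 1) := by
  rcases Nat.lt_or_ge b 2 with hb2 | hb2
  · interval_cases b
    simp [Nat.Coprime]
  · obtain ⟨u, -, hu⟩ := Nat.exists_mul_mod_eq_one_of_coprime h hb2
    set d := Nat.gcd (2 ^ a - 1) (2 ^ b - 1) with hd
    have h1 : d ∣ 2 ^ (a * u) - 1 :=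
      dvd_trans (Nat.gcd_dvd_left _ _) (aux_pow_sub_one_dvd ⟨u, rfl⟩)
    have h2 : d ∣ 2 ^ (b * (a * u / b)) - 1 :=
      dvd_trans (Nat.gcd_dvd_right _ _) (aux_pow_sub_one_dvd ⟨a * u / b, rfl⟩)
    have hdiv : a * u = b * (a * u / b) + 1 := by
      have := Nat.div_add_mod (a * u) b
      omega
    have hpow : 2 ^ (a * u) = 2 ^ (b * (a * u / b)) * 2 := by
      conv_lhs => rw [hdiv]
      rw [pow_succ]
    have hge : 1 ≤ 2 ^ (b * (a * u / b)) := Nat.one_le_two_pow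
    have h2' : d ∣ (2 ^ (b * (a * u / b)) - 1) * 2 := Dvd.dvd.mul_right h2 2
    have hsub : (2 ^ (a * u) - 1) - (2 ^ (b * (a * u / b)) - 1) * 2 = 1 := by omega
    have : d ∣ 1 := hsub ▸ Nat.dvd_sub h1 h2'
    exact Nat.dvd_one.mp this

/-- Let `r ≥ 2`, `m ≥ 1`, and let `𝔽_q` be the finite field with
`q = 2^m` elements. Every `x ∈ 𝔽_q` with `(x+1)^{2^r−1} = x^{2^r−1} + 1` equals `0`
or `1` if and only if `gcd(r−1, m) = 1`. -/
theorem stmt_13 (r m : ℕ) (hr : 2 ≤ r) (hm : 1 ≤ m) (F : Type) [Field F] [Fintype F]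
    (hF : Fintype.card F = 2 ^ m) :
    (∀ x : F, (x + 1) ^ (2 ^ r - 1) = x ^ (2 ^ r - 1) + 1 → x = 0 ∨ x = 1) ↔
      Nat.gcd (r - 1) m = 1 := by
  -- characteristic 2
  obtain ⟨n, hpn, hcard⟩ := FiniteField.card F (ringChar F)
  have hchar2 : ringChar F = 2 := by
    have h1 : ringChar F ∣ 2 ^ m := by
      rw [← hF, hcard]
      exact dvd_pow_self (ringChar F) n.ne_zero
    have h2 : ringChar F ∣ 2 := hpn.dvd_of_dvd_pow h1
    exact (Nat.prime_dvd_prime_iff_eq hpn Nat.prime_two).mp h2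
  haveI : CharP F 2 := by rw [← hchar2]; exact ringChar.charP F
  have h2rpos : (4 : ℕ) ≤ 2 ^ r := by
    calc (4:ℕ) = 2 ^ 2 := rfl
    _ ≤ 2 ^ r := Nat.pow_le_pow_right (by norm_num) hr
  have h2r : 2 ^ r - 1 + 1 = 2 ^ r := by omega
  have h2r' : 2 ^ r - 2 + 1 = 2 ^ r - 1 := by omega
  have h2half : 2 ^ r = 2 ^ (r - 1) * 2 := by
    rw [← pow_succ]
    congr 1
    omega
  have h2mpos : (2:ℕ) ≤ 2 ^ m := by
    calc (2:ℕ) = 2 ^ 1 := rfl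
    _ ≤ 2 ^ m := Nat.pow_le_pow_right (by norm_num) hm
  have frob : ∀ y : F, (y + 1) ^ (2 ^ r) = y ^ (2 ^ r) + 1 := by
    intro y
    have := add_pow_char_pow y (1 : F) 2 r
    simpa using this
  constructor
  · -- forward: contrapositive
    intro hall
    by_contra hg
    have hgdvd1 : Nat.gcd (r - 1) m ∣ r - 1 := Nat.gcd_dvd_left _ _
    have hgdvd2 : Nat.gcd (r - 1) m ∣ m := Nat.gcd_dvd_right _ _
    have hgpos : 1 ≤ Nat.gcd (r - 1) m := Nat.gcd_pos_of_pos_right _ (by omega)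
    set g := Nat.gcd (r - 1) m with hgdef
    have hg2 : 2 ≤ g := by omega
    set d := 2 ^ g - 1 with hddef
    have hd3 : 3 ≤ d := by
      have : (4:ℕ) ≤ 2 ^ g := by
        calc (4:ℕ) = 2 ^ 2 := rfl
        _ ≤ 2 ^ g := Nat.pow_le_pow_right (by norm_num) hg2
      omega
    have hd1 : d ∣ 2 ^ (r - 1) - 1 := aux_pow_sub_one_dvd hgdvd1
    have hd2 : d ∣ 2 ^ m - 1 := aux_pow_sub_one_dvd hgdvd2
    -- find an element of order d in Fˣ
    obtain ⟨g0, hg0⟩ := IsCyclic.exists_generator (α := Fˣ)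
    have horder : orderOf g0 = 2 ^ m - 1 := by
      rw [orderOf_eq_card_of_forall_mem_zpowers hg0, Nat.card_units,
        Nat.card_eq_fintype_card, hF]
    set q1 := 2 ^ m - 1 with hq1
    have hq1pos : 1 ≤ q1 := by omega
    set u := g0 ^ (q1 / d) with hudef
    have hqd : q1 / d * d = q1 := Nat.div_mul_cancel hd2
    have hqdpos : 1 ≤ q1 / d := by
      rcases Nat.eq_zero_or_pos (q1 / d) with h | h
      · rw [h, zero_mul] at hqd
        omega
      · exact h
    have hqdlt : q1 / d < q1 := by
      have := Nat.div_lt_self (by omega : 0 < q1) (by omega : 1 < d)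
      exact this
    have hune : u ≠ 1 := by
      intro h
      have : orderOf g0 ∣ q1 / d := orderOf_dvd_of_pow_eq_one h
      rw [horder] at this
      have := Nat.le_of_dvd hqdpos this
      omega
    have hud : u ^ d = 1 := by
      rw [hudef, ← pow_mul, hqd, ← horder, pow_orderOf_eq_one]
    set x : F := (u : F) with hxdef
    have hx0 : x ≠ 0 := Units.ne_zero u
    have hx1 : x ≠ 1 := by
      intro h
      exact hune (Units.val_eq_one.mp h)
    have hxd : x ^ d = 1 := by
      rw [hxdef, ← Units.val_pow_eq_pow_val, hud, Units.val_one]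
    have hxr1 : x ^ (2 ^ (r - 1) - 1) = 1 := by
      obtain ⟨c, hc⟩ := hd1
      rw [hc, pow_mul, hxd, one_pow]
    have hxr2 : x ^ (2 ^ r - 2) = 1 := by
      have he : 2 ^ r - 2 = (2 ^ (r - 1) - 1) * 2 := by omega
      rw [he, pow_mul, hxr1, one_pow]
    have hxr3 : x ^ (2 ^ r - 1) = x := by
      rw [← h2r', pow_succ, hxr2, one_mul]
    have hxr4 : x ^ (2 ^ r) = x * x := by
      rw [← h2r, pow_succ, hxr3]
    have hxadd : x + 1 ≠ 0 := by
      intro h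
      apply hx1
      have : x = -1 := eq_neg_of_add_eq_zero_left h
      rw [this, CharTwo.neg_eq]
    have heq : (x + 1) ^ (2 ^ r - 1) = x ^ (2 ^ r - 1) + 1 := by
      apply mul_right_cancel₀ hxadd
      calc (x + 1) ^ (2 ^ r - 1) * (x + 1) = (x + 1) ^ (2 ^ r) := by
            rw [← pow_succ, h2r]
        _ = x ^ (2 ^ r) + 1 := frob x
        _ = x * x + 1 := by rw [hxr4]
        _ = x * x + 1 * 1 := by ring
        _ = (x + 1) * (x + 1) := (CharTwo.add_mul_self x 1).symm
        _ = (x ^ (2 ^ r - 1) + 1) * (x + 1) := by rw [hxr3]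
    rcases hall x heq with h | h
    · exact hx0 h
    · exact hx1 h
  · -- backward
    intro hg x hx
    by_cases hx0 : x = 0
    · exact Or.inl hx0
    right
    -- derive x ^ (2^r - 1) = x
    have e1 : (x + 1) ^ (2 ^ r - 1) * (x + 1) = x ^ (2 ^ r) + 1 := by
      rw [← pow_succ, h2r]; exact frob x
    rw [hx] at e1
    have hxx : x ^ (2 ^ r) = x ^ (2 ^ r - 1) * x := by
      rw [← pow_succ, h2r]
    have e3 : x ^ (2 ^ r - 1) + x = 0 := by linear_combination e1 + hxx
    have key : x ^ (2 ^ r - 1) = x := by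
      have := CharTwo.add_eq_iff_eq_add.mp e3
      simpa using this
    have key1 : x ^ (2 ^ r - 2) = 1 := by
      apply mul_right_cancel₀ hx0
      rw [← pow_succ, h2r', key, one_mul]
    have hcardpow : x ^ (2 ^ m - 1) = 1 := by
      rw [← hF]
      exact FiniteField.pow_card_sub_one_eq_one x hx0
    have hgcd1 : x ^ Nat.gcd (2 ^ r - 2) (2 ^ m - 1) = 1 := pow_gcd_eq_one.mpr ⟨key1, hcardpow⟩
    have hodd : Nat.Coprime 2 (2 ^ m - 1) := by
      rw [Nat.prime_two.coprime_iff_not_dvd]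
      intro h
      have : 2 ∣ 2 ^ m := dvd_pow_self 2 (by omega)
      omega
    have hgcdeq : Nat.gcd (2 ^ r - 2) (2 ^ m - 1) = 1 := by
      have he : 2 ^ r - 2 = 2 * (2 ^ (r - 1) - 1) := by omega
      rw [he, hodd.gcd_mul_left_cancel]
      exact aux_coprime_pow_sub_one hm hg
    rw [hgcdeq, pow_one] at hgcd1
    exact hgcd1
end

section
/- Let r ≥ 1 be an integer. For every integer k with 0 ≤ k ≤ r, N_k^{(r)} = 4^k. -/
open scoped Classical in
noncomputable def Pset (s : ℕ) : Finset (ℕ × ℕ) :=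
  (Finset.range (s + 1) ×ˢ Finset.range (s + 1)).filter (fun p => Lessdot p.1 p.2 s)

lemma lessdot_iff' (l₁ l₂ s : ℕ) :
    Lessdot l₁ l₂ s ↔ ∀ i, l₁ / 2 ^ i % 2 + l₂ / 2 ^ i % 2 ≤ s / 2 ^ i % 2 := by
  unfold Lessdot
  simp [Nat.toNat_testBit]

lemma lessdot_div2 (l₁ l₂ s : ℕ) :
    Lessdot l₁ l₂ s ↔ (l₁ % 2 + l₂ % 2 ≤ s % 2 ∧ Lessdot (l₁ / 2) (l₂ / 2) (s / 2)) := by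
  simp only [lessdot_iff']
  constructor
  · intro h
    refine ⟨by simpa using h 0, fun i => ?_⟩
    simpa [Nat.div_div_eq_div_mul, pow_succ, mul_comm] using h (i + 1)
  · rintro ⟨h0, h⟩ i
    cases i with
    | zero => simpa using h0
    | succ i => simpa [Nat.div_div_eq_div_mul, pow_succ, mul_comm] using h i

lemma mem_Pset {s : ℕ} {p : ℕ × ℕ} :
    p ∈ Pset s ↔ p.1 ≤ s ∧ p.2 ≤ s ∧ Lessdot p.1 p.2 s := by
  simp [Pset, Finset.mem_filter, Nat.lt_succ_iff, and_assoc]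

lemma Pset_zero : Pset 0 = {(0, 0)} := by
  ext p
  simp only [mem_Pset, Finset.mem_singleton, Nat.le_zero]
  constructor
  · rintro ⟨h1, h2, _⟩; exact Prod.ext h1 h2
  · rintro rfl; exact ⟨rfl, rfl, fun i => by simp⟩

lemma Pset_even (s : ℕ) : (Pset (2 * s)).card = (Pset s).card := by
  refine Finset.card_nbij' (fun q => (q.1 / 2, q.2 / 2)) (fun p => (2 * p.1, 2 * p.2)) ?_ ?_ ?_ ?_
  · intro q hq
    dsimp only
    rw [Finset.mem_coe, mem_Pset] at hq ⊢
    obtain ⟨h1, h2, h3⟩ := hq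
    rw [lessdot_div2] at h3
    have hs : (2 * s) / 2 = s := by omega
    exact ⟨by omega, by omega, hs ▸ h3.2⟩
  · intro p hp
    dsimp only
    rw [Finset.mem_coe, mem_Pset] at hp ⊢
    obtain ⟨h1, h2, h3⟩ := hp
    refine ⟨by omega, by omega, ?_⟩
    rw [lessdot_div2]
    refine ⟨by omega, ?_⟩
    have e1 : 2 * p.1 / 2 = p.1 := by omega
    have e2 : 2 * p.2 / 2 = p.2 := by omega
    have e3 : 2 * s / 2 = s := by omega
    simpa [e1, e2, e3] using h3
  · intro q hq
    dsimp only
    rw [Finset.mem_coe, mem_Pset] at hq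
    obtain ⟨h1, h2, h3⟩ := hq
    rw [lessdot_div2] at h3
    have h0 := h3.1
    have hm : (2 * s) % 2 = 0 := by omega
    refine Prod.ext ?_ ?_ <;> simp <;> omega
  · intro p _
    dsimp only
    refine Prod.ext ?_ ?_ <;> simp <;> omega

def Dset : Finset (ℕ × ℕ) := {(0, 0), (1, 0), (0, 1)}

lemma mem_Dset {p : ℕ × ℕ} : p ∈ Dset ↔ p.1 ≤ 1 ∧ p.2 ≤ 1 ∧ p.1 + p.2 ≤ 1 := by
  rcases p with ⟨a, b⟩
  simp [Dset, Prod.ext_iff]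
  omega

lemma Pset_odd (s : ℕ) : (Pset (2 * s + 1)).card = 3 * (Pset s).card := by
  have key : (Pset (2 * s + 1)).card = (Pset s ×ˢ Dset).card := by
    refine Finset.card_nbij' (fun q => ((q.1 / 2, q.2 / 2), (q.1 % 2, q.2 % 2)))
      (fun p => (2 * p.1.1 + p.2.1, 2 * p.1.2 + p.2.2)) ?_ ?_ ?_ ?_
    · intro q hq
      dsimp only
      rw [Finset.mem_coe, mem_Pset] at hq
      obtain ⟨h1, h2, h3⟩ := hq
      rw [lessdot_div2] at h3
      have h0 := h3.1
      have hm : (2 * s + 1) % 2 = 1 := by omega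
      rw [Finset.mem_coe, Finset.mem_product, mem_Pset, mem_Dset]
      dsimp only
      have hd : (2 * s + 1) / 2 = s := by omega
      exact ⟨⟨by omega, by omega, hd ▸ h3.2⟩, by omega, by omega, by omega⟩
    · intro p hp
      dsimp only
      rw [Finset.mem_coe, Finset.mem_product, mem_Pset, mem_Dset] at hp
      obtain ⟨⟨h1, h2, h3⟩, e1, e2, e3⟩ := hp
      rw [Finset.mem_coe, mem_Pset]
      dsimp only
      refine ⟨by omega, by omega, ?_⟩
      rw [lessdot_div2]
      refine ⟨by omega, ?_⟩
      have f1 : (2 * p.1.1 + p.2.1) / 2 = p.1.1 := by omega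
      have f2 : (2 * p.1.2 + p.2.2) / 2 = p.1.2 := by omega
      have f3 : (2 * s + 1) / 2 = s := by omega
      simpa [f1, f2, f3] using h3
    · intro q hq
      dsimp only
      refine Prod.ext ?_ ?_ <;> simp <;> omega
    · intro p hp
      dsimp only
      rw [Finset.mem_coe, Finset.mem_product, mem_Pset, mem_Dset] at hp
      obtain ⟨⟨h1, h2, h3⟩, e1, e2, e3⟩ := hp
      refine Prod.ext (Prod.ext ?_ ?_) (Prod.ext ?_ ?_) <;> simp <;> omega
  rw [key, Finset.card_product]
  have : Dset.card = 3 := by decide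
  rw [this, mul_comm]

lemma sum_range_two_mul (n : ℕ) (f : ℕ → ℕ) :
    ∑ s ∈ Finset.range (2 * n), f s = ∑ i ∈ Finset.range n, (f (2 * i) + f (2 * i + 1)) := by
  induction n with
  | zero => simp
  | succ n ih =>
    have : 2 * (n + 1) = (2 * n + 1) + 1 := by ring
    rw [this, Finset.sum_range_succ, Finset.sum_range_succ, ih, Finset.sum_range_succ]
    ring

lemma sum_Pset (k : ℕ) : ∑ s ∈ Finset.range (2 ^ k), (Pset s).card = 4 ^ k := by
  induction k with
  | zero => simp [Pset_zero]
  | succ k ih =>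
    have h2 : (2 : ℕ) ^ (k + 1) = 2 * 2 ^ k := by ring
    rw [h2, sum_range_two_mul]
    have : ∀ i, (Pset (2 * i)).card + (Pset (2 * i + 1)).card = 4 * (Pset i).card := by
      intro i; rw [Pset_even, Pset_odd]; ring
    rw [Finset.sum_congr rfl (fun i _ => this i), ← Finset.mul_sum, ih]
    ring

lemma BSet_card (r s : ℕ) (hs : s < 2 ^ r) : (BSet r s).card = (Pset s).card := by
  have hB : BSet r s = (Pset s).image (fun p => 2 ^ r * p.1 + p.2) := rfl
  rw [hB]
  apply Finset.card_image_of_injOn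
  intro p hp q hq h
  rw [Finset.mem_coe, mem_Pset] at hp hq
  dsimp only at h
  have hp2 : p.2 < 2 ^ r := lt_of_le_of_lt hp.2.1 hs
  have hq2 : q.2 < 2 ^ r := lt_of_le_of_lt hq.2.1 hs
  have h2 : p.2 = q.2 := by
    have := congrArg (· % 2 ^ r) h
    simpa [Nat.mul_add_mod, Nat.mod_eq_of_lt hp2, Nat.mod_eq_of_lt hq2] using this
  have h1 : p.1 = q.1 := by
    have hpos : 0 < 2 ^ r := Nat.pow_pos (by norm_num)
    have : 2 ^ r * p.1 = 2 ^ r * q.1 := by omega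
    exact Nat.eq_of_mul_eq_mul_left hpos this
  exact Prod.ext h1 h2

/-- For `r ≥ 1` and `0 ≤ k ≤ r`, `N_k^{(r)} = 4^k`. -/
theorem stmt_15 (r k : ℕ) (hr : 1 ≤ r) (hk : k ≤ r) :
    Nnum r k = 4 ^ k := by
  rw [Nnum, ← sum_Pset k]
  apply Finset.sum_congr rfl
  intro s hs
  rw [Finset.mem_range] at hs
  exact BSet_card r s (lt_of_lt_of_le hs (Nat.pow_le_pow_right (by norm_num) hk))
end

section
/- Let r ≥ 1 be an integer. Then N_{r+1}^{(r)} ≤ 15·4^{r−1}. -/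
open Finset

namespace Stmt16

open scoped Classical in
/-- The finite set of admissible pairs for `s`. -/
noncomputable def Fs (s : ℕ) : Finset (ℕ × ℕ) :=
  (Finset.range (s + 1) ×ˢ Finset.range (s + 1)).filter (fun p => Lessdot p.1 p.2 s)

open scoped Classical in
/-- Pairs in `Fs s` producing duplicate values. -/
noncomputable def Gs (r s : ℕ) : Finset (ℕ × ℕ) :=
  (Fs s).filter (fun p => p.2.testBit r = true ∧ p.1.testBit 0 = false ∧
    p.2.testBit 0 = false ∧ s.testBit 0 = true)

lemma BSet_eq (r s : ℕ) : BSet r s = (Fs s).image (fun p => 2 ^ r * p.1 + p.2) := rfl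

lemma le_of_lessdot_left {l₁ l₂ s : ℕ} (h : Lessdot l₁ l₂ s) : l₁ ≤ s := by
  apply Nat.le_of_testBit
  intro i hi
  have hh := h i
  rw [hi] at hh
  cases hs : s.testBit i
  · rw [hs] at hh; simp at hh
  · rfl

lemma le_of_lessdot_right {l₁ l₂ s : ℕ} (h : Lessdot l₁ l₂ s) : l₂ ≤ s := by
  apply Nat.le_of_testBit
  intro i hi
  have hh := h i
  rw [hi] at hh
  cases hs : s.testBit i
  · rw [hs] at hh; simp at hh
  · rfl

lemma mem_Fs {s : ℕ} {p : ℕ × ℕ} : p ∈ Fs s ↔ Lessdot p.1 p.2 s := by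
  classical
  simp only [Fs, Finset.mem_filter, Finset.mem_product, Finset.mem_range]
  constructor
  · tauto
  · intro h
    exact ⟨⟨Nat.lt_succ_of_le (le_of_lessdot_left h),
      Nat.lt_succ_of_le (le_of_lessdot_right h)⟩, h⟩

lemma testBit_two_mul_zero (x : ℕ) : (2 * x).testBit 0 = false := by
  simp [Nat.testBit_zero, Nat.mul_mod_right]

lemma testBit_two_mul_succ (x j : ℕ) : (2 * x).testBit (j + 1) = x.testBit j := by
  rw [Nat.testBit_add_one]
  congr 1
  omega

lemma testBit_two_mul_add_one_zero (x : ℕ) : (2 * x + 1).testBit 0 = true := by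
  simp [Nat.testBit_zero, Nat.mul_add_mod]

lemma testBit_two_mul_add_one_succ (x j : ℕ) :
    (2 * x + 1).testBit (j + 1) = x.testBit j := by
  rw [Nat.testBit_add_one]
  congr 1
  omega

lemma bool_key1 : ∀ a b c a' b' c' : Bool,
    b.toNat + c.toNat ≤ a.toNat → b'.toNat + c'.toNat ≤ a'.toNat →
    (a ^^ b) = (a' ^^ b') → (b || c) = (b' || c') →
    a = a' ∧ b = b' ∧ c = c' := by decide

lemma bool_key2 : ∀ a b a' b' : Bool,
    (a || b) = (a' || b') → (b && (a ^^ b)) = (b' && (a' ^^ b')) →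
    (a && b) = (a' && b') → a = a' ∧ b = b' := by decide

/-- The image over `Fs` is already obtained from `Fs \ Gs`. -/
lemma image_sdiff (r s : ℕ) (hr : 1 ≤ r) (hs : s < 2 ^ (r + 1)) :
    (Fs s).image (fun p => 2 ^ r * p.1 + p.2) =
      ((Fs s) \ (Gs r s)).image (fun p => 2 ^ r * p.1 + p.2) := by
  classical
  apply Finset.Subset.antisymm
  · intro v hv
    rw [Finset.mem_image] at hv ⊢
    obtain ⟨p, hp, hfp⟩ := hv
    by_cases hpG : p ∈ Gs r s
    · obtain ⟨l₁, l₂⟩ := p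
      obtain ⟨h2r, h10, h20, hs0⟩ := (Finset.mem_filter.mp hpG).2
      have hld : Lessdot l₁ l₂ s := mem_Fs.mp hp
      have hl2s : l₂ ≤ s := le_of_lessdot_right hld
      have h2le : 2 ^ r ≤ l₂ := Nat.ge_two_pow_of_testBit h2r
      set a := l₂ - 2 ^ r with ha
      have hpow : 2 ^ (r + 1) = 2 * 2 ^ r := by rw [pow_succ]; ring
      have haltr : a < 2 ^ r := by omega
      have hl2eq : l₂ = 2 ^ r + a := by omega
      -- parity facts
      have hl1even : l₁ % 2 = 0 := by
        have := h10
        simp only [Nat.testBit_zero, decide_eq_false_iff_not] at this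
        omega
      have hl2even : l₂ % 2 = 0 := by
        have := h20
        simp only [Nat.testBit_zero, decide_eq_false_iff_not] at this
        omega
      have hpow2 : 2 ^ r % 2 = 0 := by
        have : (2:ℕ) ^ r = 2 * 2 ^ (r - 1) := by
          rw [← pow_succ']
          congr 1
          omega
        omega
      have ha0 : a.testBit 0 = false := by
        simp only [Nat.testBit_zero, decide_eq_false_iff_not]
        omega
      -- bits of a are bounded by bits of l₂
      have hta : ∀ j, (a.testBit j).toNat ≤ (l₂.testBit j).toNat := by
        intro j
        rcases lt_or_ge j r with hj | hj
        · rw [hl2eq, Nat.testBit_two_pow_add_gt hj]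
        · rw [Nat.testBit_lt_two_pow
            (lt_of_lt_of_le haltr (Nat.pow_le_pow_right (by norm_num) hj))]
          simp
      have hl1succ : ∀ j, (l₁ + 1).testBit (j + 1) = l₁.testBit (j + 1) := by
        intro j
        rw [Nat.testBit_add_one, Nat.testBit_add_one]
        congr 1
        omega
      have hld' : Lessdot (l₁ + 1) a s := by
        intro i
        match i with
        | 0 =>
          have h1 : (l₁ + 1).testBit 0 = true := by
            simp only [Nat.testBit_zero, decide_eq_true_eq]
            omega
          rw [h1, ha0, hs0]
          simp
        | (j + 1) =>
          rw [hl1succ j]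
          calc (l₁.testBit (j+1)).toNat + (a.testBit (j+1)).toNat
              ≤ (l₁.testBit (j+1)).toNat + (l₂.testBit (j+1)).toNat := by
                have := hta (j+1); omega
            _ ≤ (s.testBit (j+1)).toNat := hld (j+1)
      refine ⟨(l₁ + 1, a), Finset.mem_sdiff.mpr ⟨mem_Fs.mpr hld', ?_⟩, ?_⟩
      · intro hmem
        have := (Finset.mem_filter.mp hmem).2.1
        rw [Nat.testBit_lt_two_pow haltr] at this
        exact absurd this (by simp)
      · rw [← hfp, hl2eq]
        ring
    · exact ⟨p, Finset.mem_sdiff.mpr ⟨hp, hpG⟩, hfp⟩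
  · exact Finset.image_subset_image Finset.sdiff_subset

/-- The total number of admissible triples is at most `4^m`. -/
lemma sumF (m : ℕ) : ∑ s ∈ Finset.range (2 ^ m), (Fs s).card ≤ 4 ^ m := by
  classical
  rw [← Finset.card_sigma]
  have hcard : (Finset.range (2 ^ m) ×ˢ Finset.range (2 ^ m)).card = 4 ^ m := by
    rw [Finset.card_product, Finset.card_range, show (4:ℕ) = 2 * 2 from rfl,
      Nat.mul_pow]
  rw [← hcard]
  apply Finset.card_le_card_of_injOn
    (fun q : Σ _ : ℕ, ℕ × ℕ => (q.1 ^^^ q.2.1, q.2.1 ||| q.2.2))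
  · intro q hq
    obtain ⟨hq1, hq2⟩ := Finset.mem_sigma.mp hq
    have hld := mem_Fs.mp hq2
    have hs : q.1 < 2 ^ m := Finset.mem_range.mp hq1
    have hl1 : q.2.1 < 2 ^ m := lt_of_le_of_lt (le_of_lessdot_left hld) hs
    have hl2 : q.2.2 < 2 ^ m := lt_of_le_of_lt (le_of_lessdot_right hld) hs
    simp only [Finset.mem_coe, Finset.mem_product, Finset.mem_range]
    exact ⟨Nat.xor_lt_two_pow hs hl1, Nat.or_lt_two_pow hl1 hl2⟩
  · rintro ⟨s, l₁, l₂⟩ hq ⟨s', l₁', l₂'⟩ hq' heq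
    simp only [Finset.coe_sigma, Set.mem_sigma_iff, Finset.mem_coe] at hq hq'
    have hld : Lessdot l₁ l₂ s := mem_Fs.mp hq.2
    have hld' : Lessdot l₁' l₂' s' := mem_Fs.mp hq'.2
    rw [Prod.mk.injEq] at heq
    obtain ⟨hx, ho⟩ := heq
    have key : ∀ i, s.testBit i = s'.testBit i ∧ l₁.testBit i = l₁'.testBit i ∧
        l₂.testBit i = l₂'.testBit i := by
      intro i
      have hxi := congrArg (fun n => n.testBit i) hx
      have hoi := congrArg (fun n => n.testBit i) ho
      simp only [Nat.testBit_xor, Nat.testBit_or] at hxi hoi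
      exact bool_key1 _ _ _ _ _ _ (hld i) (hld' i) hxi hoi
    have e1 : s = s' := Nat.eq_of_testBit_eq fun i => (key i).1
    have e2 : l₁ = l₁' := Nat.eq_of_testBit_eq fun i => (key i).2.1
    have e3 : l₂ = l₂' := Nat.eq_of_testBit_eq fun i => (key i).2.2
    subst e1; subst e2; subst e3; rfl

/-- The total number of duplicate pairs is at least `4^t` (here `r = t+1`, `m = t+2`). -/
lemma sumG (t : ℕ) :
    4 ^ t ≤ ∑ s ∈ Finset.range (2 ^ (t + 2)), (Gs (t + 1) s).card := by
  classical
  rw [← Finset.card_sigma]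
  have hcard : (Finset.range (2 ^ t) ×ˢ Finset.range (2 ^ t)).card = 4 ^ t := by
    rw [Finset.card_product, Finset.card_range, show (4:ℕ) = 2 * 2 from rfl,
      Nat.mul_pow]
  rw [← hcard]
  apply Finset.card_le_card_of_injOn
    (fun w : ℕ × ℕ => (⟨2 ^ (t + 1) ||| (2 * (w.1 ||| w.2) + 1),
      (2 * (w.2 &&& (w.1 ^^^ w.2)), 2 ^ (t + 1) ||| (2 * (w.1 &&& w.2)))⟩ :
      Σ _ : ℕ, ℕ × ℕ))
  · rintro ⟨u, v⟩ hw
    simp only [Finset.mem_coe, Finset.mem_product, Finset.mem_range] at hw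
    obtain ⟨hu, hv⟩ := hw
    have hA : u ||| v < 2 ^ t := Nat.or_lt_two_pow hu hv
    have hBt : (v &&& (u ^^^ v)).testBit t = false := by
      rw [Nat.testBit_and, Nat.testBit_lt_two_pow hv]
      simp
    have hCt : (u &&& v).testBit t = false := by
      rw [Nat.testBit_and, Nat.testBit_lt_two_pow hv]
      simp
    -- s, l₁, l₂
    have hsbit0 : (2 ^ (t + 1) ||| (2 * (u ||| v) + 1)).testBit 0 = true := by
      rw [Nat.testBit_or, testBit_two_mul_add_one_zero]
      simp
    have hl2bit0 : (2 ^ (t + 1) ||| (2 * (u &&& v))).testBit 0 = false := by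
      rw [Nat.testBit_or, testBit_two_mul_zero,
        Nat.testBit_two_pow_of_ne (by omega)]
      rfl
    have hl2bitr : (2 ^ (t + 1) ||| (2 * (u &&& v))).testBit (t + 1) = true := by
      rw [Nat.testBit_or, Nat.testBit_two_pow_self]
      rfl
    have hld : Lessdot (2 * (v &&& (u ^^^ v))) (2 ^ (t + 1) ||| (2 * (u &&& v)))
        (2 ^ (t + 1) ||| (2 * (u ||| v) + 1)) := by
      intro i
      match i with
      | 0 =>
        rw [testBit_two_mul_zero, hl2bit0, hsbit0]
        simp
      | (j + 1) =>
        rw [testBit_two_mul_succ, Nat.testBit_or, Nat.testBit_or,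
          testBit_two_mul_succ, testBit_two_mul_add_one_succ]
        by_cases hjt : j = t
        · subst hjt
          rw [Nat.testBit_two_pow_self, hBt]
          simp
        · rw [Nat.testBit_two_pow_of_ne (by omega)]
          simp only [Nat.testBit_and, Nat.testBit_xor, Nat.testBit_or,
            Bool.false_or]
          cases u.testBit j <;> cases v.testBit j <;> simp
    refine Finset.mem_sigma.mpr ⟨?_, ?_⟩
    · rw [Finset.mem_range]
      have h1 : (2:ℕ) ^ (t + 1) < 2 ^ (t + 2) := by
        have : (2:ℕ) ^ (t + 2) = 2 ^ (t + 1) * 2 := by rw [pow_succ]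
        have h2 : 0 < (2:ℕ) ^ (t + 1) := Nat.pow_pos (by norm_num)
        omega
      have h2 : 2 * (u ||| v) + 1 < 2 ^ (t + 2) := by
        have e1 : (2:ℕ) ^ (t + 1) = 2 ^ t * 2 := by rw [pow_succ]
        have e2 : (2:ℕ) ^ (t + 2) = 2 ^ (t + 1) * 2 := by rw [pow_succ]
        omega
      exact Nat.or_lt_two_pow h1 h2
    · refine Finset.mem_filter.mpr ⟨mem_Fs.mpr hld, ?_⟩
      exact ⟨hl2bitr, testBit_two_mul_zero _, hl2bit0, hsbit0⟩
  · rintro ⟨u, v⟩ hw ⟨u', v'⟩ hw' heq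
    simp only [Finset.coe_product, Set.mem_prod, Finset.mem_coe,
      Finset.mem_range] at hw hw'
    obtain ⟨hu, hv⟩ := hw
    obtain ⟨hu', hv'⟩ := hw'
    have hseq := congrArg (fun q : (Σ _ : ℕ, ℕ × ℕ) => q.1) heq
    have hp := congrArg (fun q : (Σ _ : ℕ, ℕ × ℕ) => q.2) heq
    simp only at hseq hp
    rw [Prod.mk.injEq] at hp
    obtain ⟨hBeq2, hCeq2⟩ := hp
    have hBeq : v &&& (u ^^^ v) = v' &&& (u' ^^^ v') := by omega
    have hA : u ||| v < 2 ^ t := Nat.or_lt_two_pow hu hv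
    have hA' : u' ||| v' < 2 ^ t := Nat.or_lt_two_pow hu' hv'
    have hAeq : u ||| v = u' ||| v' := by
      apply Nat.eq_of_testBit_eq
      intro j
      have h := congrArg (fun n => n.testBit (j + 1)) hseq
      simp only [Nat.testBit_or, testBit_two_mul_add_one_succ] at h
      by_cases hjt : j = t
      · subst hjt
        rw [Nat.testBit_lt_two_pow hA, Nat.testBit_lt_two_pow hA']
      · rw [Nat.testBit_two_pow_of_ne (by omega)] at h
        simpa using h
    have hCeq : u &&& v = u' &&& v' := by
      apply Nat.eq_of_testBit_eq
      intro j
      have h := congrArg (fun n => n.testBit (j + 1)) hCeq2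
      simp only [Nat.testBit_or, testBit_two_mul_succ] at h
      by_cases hjt : j = t
      · subst hjt
        rw [Nat.testBit_and, Nat.testBit_and, Nat.testBit_lt_two_pow hv,
          Nat.testBit_lt_two_pow hv']
        simp
      · rw [Nat.testBit_two_pow_of_ne (by omega)] at h
        simpa using h
    have key : ∀ j, u.testBit j = u'.testBit j ∧ v.testBit j = v'.testBit j := by
      intro j
      have hA := congrArg (fun n => n.testBit j) hAeq
      have hB := congrArg (fun n => n.testBit j) hBeq
      have hC := congrArg (fun n => n.testBit j) hCeq
      simp only [Nat.testBit_or, Nat.testBit_and, Nat.testBit_xor] at hA hB hC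
      exact bool_key2 _ _ _ _ hA hB hC
    have e1 : u = u' := Nat.eq_of_testBit_eq fun j => (key j).1
    have e2 : v = v' := Nat.eq_of_testBit_eq fun j => (key j).2
    rw [e1, e2]

end Stmt16

/-- For `r ≥ 1`, `N_{r+1}^{(r)} ≤ 15·4^{r−1}`. -/
theorem stmt_16 (r : ℕ) (hr : 1 ≤ r) :
    Nnum r (r + 1) ≤ 15 * 4 ^ (r - 1) := by
  obtain ⟨t, rfl⟩ : ∃ t, r = t + 1 := ⟨r - 1, by omega⟩
  have hpt : ∀ s ∈ Finset.range (2 ^ (t + 2)),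
      (BSet (t + 1) s).card + (Stmt16.Gs (t + 1) s).card ≤ (Stmt16.Fs s).card := by
    intro s hs
    rw [Stmt16.BSet_eq,
      Stmt16.image_sdiff (t + 1) s (by omega) (Finset.mem_range.mp hs)]
    calc ((Stmt16.Fs s \ Stmt16.Gs (t + 1) s).image
            (fun p => 2 ^ (t + 1) * p.1 + p.2)).card + (Stmt16.Gs (t + 1) s).card
        ≤ (Stmt16.Fs s \ Stmt16.Gs (t + 1) s).card + (Stmt16.Gs (t + 1) s).card :=
          Nat.add_le_add_right Finset.card_image_le _
      _ = (Stmt16.Fs s).card :=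
          Finset.card_sdiff_add_card_eq_card (Finset.filter_subset _ _)
  have hsum : Nnum (t + 1) (t + 2) +
      ∑ s ∈ Finset.range (2 ^ (t + 2)), (Stmt16.Gs (t + 1) s).card ≤
      ∑ s ∈ Finset.range (2 ^ (t + 2)), (Stmt16.Fs s).card := by
    simp only [Nnum]
    rw [← Finset.sum_add_distrib]
    exact Finset.sum_le_sum hpt
  have h1 := Stmt16.sumF (t + 2)
  have h2 := Stmt16.sumG t
  have h3 : (4 : ℕ) ^ (t + 2) = 16 * 4 ^ t := by ring
  simp only [Nat.add_sub_cancel]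
  show Nnum (t + 1) (t + 2) ≤ 15 * 4 ^ t
  omega
end

section
/- Let r ≥ 1 and m ≥ 0 be integers. Then N_m^{(r)} ≤ (15/16)^{⌊m/(r+1)⌋} · 4^m, where the inequality is between real numbers. -/
namespace Stmt17

open Finset

open scoped Classical in
noncomputable def Pairs (s : ℕ) : Finset (ℕ × ℕ) :=
  (Finset.range (s + 1) ×ˢ Finset.range (s + 1)).filter (fun p => Lessdot p.1 p.2 s)

lemma BSet_eq (r s : ℕ) : BSet r s = (Pairs s).image (fun p => 2 ^ r * p.1 + p.2) := rfl

lemma lessdot_le {l₁ l₂ s : ℕ} (h : Lessdot l₁ l₂ s) : l₁ ≤ s ∧ l₂ ≤ s := by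
  constructor
  · have h1 : l₁ &&& s = l₁ := by
      apply Nat.eq_of_testBit_eq
      intro i
      rw [Nat.testBit_and]
      have := h i
      cases hb : l₁.testBit i <;> cases hc : s.testBit i <;> simp_all
    calc l₁ = l₁ &&& s := h1.symm
    _ ≤ s := Nat.and_le_right
  · have h1 : l₂ &&& s = l₂ := by
      apply Nat.eq_of_testBit_eq
      intro i
      rw [Nat.testBit_and]
      have := h i
      cases hb : l₂.testBit i <;> cases hc : s.testBit i <;> simp_all
    calc l₂ = l₂ &&& s := h1.symm
    _ ≤ s := Nat.and_le_right

lemma mem_Pairs {p : ℕ × ℕ} {s : ℕ} : p ∈ Pairs s ↔ Lessdot p.1 p.2 s := by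
  unfold Pairs
  simp only [Finset.mem_filter, Finset.mem_product, Finset.mem_range]
  constructor
  · exact fun h => h.2
  · intro h
    have := lessdot_le h
    exact ⟨⟨by omega, by omega⟩, h⟩

lemma testBit_div_pow (x b i : ℕ) : (x / 2 ^ b).testBit i = x.testBit (b + i) := by
  induction b generalizing i with
  | zero => simp
  | succ b ih =>
    have : x / 2 ^ (b + 1) = x / 2 ^ b / 2 := by
      rw [Nat.div_div_eq_div_mul, pow_succ]
    rw [this, Nat.testBit_div_two, ih (i + 1)]
    congr 1; omega

lemma lessdot_split {b l₁ l₂ u v : ℕ} (hv : v < 2 ^ b) :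
    Lessdot l₁ l₂ (u * 2 ^ b + v) ↔
      Lessdot (l₁ / 2 ^ b) (l₂ / 2 ^ b) u ∧ Lessdot (l₁ % 2 ^ b) (l₂ % 2 ^ b) v := by
  have hb : 0 < 2 ^ b := Nat.two_pow_pos b
  have hd : (u * 2 ^ b + v) / 2 ^ b = u := by
    rw [mul_comm, Nat.mul_add_div hb, Nat.div_eq_of_lt hv, Nat.add_zero]
  have hm : (u * 2 ^ b + v) % 2 ^ b = v := by
    rw [mul_comm, Nat.mul_add_mod, Nat.mod_eq_of_lt hv]
  constructor
  · intro h
    constructor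
    · intro i
      have := h (b + i)
      rwa [← hd, testBit_div_pow, testBit_div_pow, testBit_div_pow]
    · intro i
      rcases lt_or_ge i b with hi | hi
      · have := h i
        rw [← hm, Nat.testBit_mod_two_pow, Nat.testBit_mod_two_pow, Nat.testBit_mod_two_pow]
        simpa [hi]
      · have e1 : (l₁ % 2 ^ b).testBit i = false :=
          Nat.testBit_eq_false_of_lt (lt_of_lt_of_le (Nat.mod_lt _ hb)
            (Nat.pow_le_pow_right (by norm_num) hi))
        have e2 : (l₂ % 2 ^ b).testBit i = false :=
          Nat.testBit_eq_false_of_lt (lt_of_lt_of_le (Nat.mod_lt _ hb)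
            (Nat.pow_le_pow_right (by norm_num) hi))
        simp [e1, e2]
  · rintro ⟨h1, h2⟩ i
    rcases lt_or_ge i b with hi | hi
    · have := h2 i
      rw [Nat.testBit_mod_two_pow, Nat.testBit_mod_two_pow] at this
      simp only [hi, decide_true, Bool.true_and] at this
      have hv' : v.testBit i = (u * 2 ^ b + v).testBit i := by
        conv_lhs => rw [← hm]
        rw [Nat.testBit_mod_two_pow]
        simp [hi]
      rw [hv'] at this
      simpa using this
    · obtain ⟨j, rfl⟩ := Nat.exists_eq_add_of_le hi
      have := h1 j
      rwa [testBit_div_pow, testBit_div_pow, ← hd, testBit_div_pow] at this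



lemma mem_BSet {n r s : ℕ} : n ∈ BSet r s ↔ ∃ l₁ l₂, Lessdot l₁ l₂ s ∧ 2 ^ r * l₁ + l₂ = n := by
  rw [BSet_eq, Finset.mem_image]
  constructor
  · rintro ⟨p, hp, rfl⟩
    exact ⟨p.1, p.2, mem_Pairs.mp hp, rfl⟩
  · rintro ⟨l₁, l₂, h, rfl⟩
    exact ⟨(l₁, l₂), mem_Pairs.mpr h, rfl⟩

lemma Pairs_card_mul {u v b : ℕ} (hv : v < 2 ^ b) :
    (Pairs (u * 2 ^ b + v)).card ≤ (Pairs u).card * (Pairs v).card := by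
  rw [← Finset.card_product]
  apply Finset.card_le_card_of_injOn
    (fun p => ((p.1 / 2 ^ b, p.2 / 2 ^ b), (p.1 % 2 ^ b, p.2 % 2 ^ b)))
  · intro p hp
    rw [Finset.mem_coe, mem_Pairs, lessdot_split hv] at hp
    rw [Finset.mem_coe, Finset.mem_product]
    exact ⟨mem_Pairs.mpr hp.1, mem_Pairs.mpr hp.2⟩
  · intro p _ q _ h
    simp only [Prod.mk.injEq] at h
    obtain ⟨⟨h1, h2⟩, h3, h4⟩ := h
    have e1 : p.1 = q.1 := by
      have a1 := Nat.div_add_mod p.1 (2 ^ b)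
      rw [h1, h3] at a1
      have a2 := Nat.div_add_mod q.1 (2 ^ b)
      omega
    have e2 : p.2 = q.2 := by
      have a1 := Nat.div_add_mod p.2 (2 ^ b)
      rw [h2, h4] at a1
      have a2 := Nat.div_add_mod q.2 (2 ^ b)
      omega
    exact Prod.ext e1 e2

lemma BSet_subset {r u v b : ℕ} (hv : v < 2 ^ b) :
    BSet r (u * 2 ^ b + v) ⊆
      ((BSet r u) ×ˢ (BSet r v)).image (fun p => 2 ^ b * p.1 + p.2) := by
  intro n hn
  obtain ⟨l₁, l₂, h, rfl⟩ := mem_BSet.mp hn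
  rw [lessdot_split hv] at h
  rw [Finset.mem_image]
  refine ⟨(2 ^ r * (l₁ / 2 ^ b) + l₂ / 2 ^ b, 2 ^ r * (l₁ % 2 ^ b) + l₂ % 2 ^ b), ?_, ?_⟩
  · rw [Finset.mem_product]
    exact ⟨mem_BSet.mpr ⟨_, _, h.1, rfl⟩, mem_BSet.mpr ⟨_, _, h.2, rfl⟩⟩
  · have e1 : 2 ^ b * (l₁ / 2 ^ b) + l₁ % 2 ^ b = l₁ := Nat.div_add_mod l₁ (2 ^ b)
    have e2 : 2 ^ b * (l₂ / 2 ^ b) + l₂ % 2 ^ b = l₂ := Nat.div_add_mod l₂ (2 ^ b)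
    simp only
    nth_rewrite 3 [← e1]
    nth_rewrite 3 [← e2]
    ring

lemma BSet_card_mul (r : ℕ) {u v b : ℕ} (hv : v < 2 ^ b) :
    (BSet r (u * 2 ^ b + v)).card ≤ (BSet r u).card * (BSet r v).card := by
  calc (BSet r (u * 2 ^ b + v)).card
      ≤ (((BSet r u) ×ˢ (BSet r v)).image (fun p => 2 ^ b * p.1 + p.2)).card :=
        Finset.card_le_card (BSet_subset hv)
    _ ≤ ((BSet r u) ×ˢ (BSet r v)).card := Finset.card_image_le
    _ = _ := Finset.card_product _ _

lemma sum_range_pow_split (f : ℕ → ℕ) (a b : ℕ) :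
    ∑ s ∈ Finset.range (2 ^ (a + b)), f s =
      ∑ u ∈ Finset.range (2 ^ a), ∑ v ∈ Finset.range (2 ^ b), f (u * 2 ^ b + v) := by
  have hb : 0 < 2 ^ b := Nat.two_pow_pos b
  rw [← Finset.sum_product']
  refine Finset.sum_nbij' (fun s => (s / 2 ^ b, s % 2 ^ b)) (fun p => p.1 * 2 ^ b + p.2)
    ?_ ?_ ?_ ?_ ?_
  · intro s hs
    rw [Finset.mem_range] at hs
    rw [Finset.mem_product, Finset.mem_range, Finset.mem_range]
    constructor
    · rw [Nat.div_lt_iff_lt_mul hb, ← pow_add]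
      exact hs
    · exact Nat.mod_lt _ hb
  · intro p hp
    rw [Finset.mem_product, Finset.mem_range, Finset.mem_range] at hp
    rw [Finset.mem_range, pow_add]
    calc p.1 * 2 ^ b + p.2 < p.1 * 2 ^ b + 2 ^ b := by omega
      _ = (p.1 + 1) * 2 ^ b := by ring
      _ ≤ 2 ^ a * 2 ^ b := Nat.mul_le_mul_right _ (by omega)
  · intro s _
    simp only
    rw [mul_comm]
    exact Nat.div_add_mod s (2 ^ b)
  · intro p hp
    rw [Finset.mem_product, Finset.mem_range, Finset.mem_range] at hp
    have hd : (p.1 * 2 ^ b + p.2) / 2 ^ b = p.1 := by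
      rw [mul_comm, Nat.mul_add_div hb, Nat.div_eq_of_lt hp.2, Nat.add_zero]
    have hm : (p.1 * 2 ^ b + p.2) % 2 ^ b = p.2 := by
      rw [mul_comm, Nat.mul_add_mod, Nat.mod_eq_of_lt hp.2]
    simp [hd, hm]
  · intro s _
    simp only
    congr 1
    exact (Nat.div_add_mod' s (2 ^ b)).symm

lemma sum_pow_le (f : ℕ → ℕ) (hf : ∀ u v b, v < 2 ^ b → f (u * 2 ^ b + v) ≤ f u * f v)
    (a b : ℕ) :
    ∑ s ∈ Finset.range (2 ^ (a + b)), f s ≤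
      (∑ s ∈ Finset.range (2 ^ a), f s) * (∑ s ∈ Finset.range (2 ^ b), f s) := by
  rw [sum_range_pow_split f a b, Finset.sum_mul_sum]
  exact Finset.sum_le_sum fun u _ => Finset.sum_le_sum fun v hv =>
    hf u v b (Finset.mem_range.mp hv)



lemma Pairs_zero_card : (Pairs 0).card ≤ 1 := by
  have : Pairs 0 ⊆ {(0, 0)} := by
    intro p hp
    have h := mem_Pairs.mp hp
    have := lessdot_le h
    simp only [Finset.mem_singleton]
    have : p.1 = 0 ∧ p.2 = 0 := by omega
    exact Prod.ext this.1 this.2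
  calc (Pairs 0).card ≤ ({(0,0)} : Finset (ℕ × ℕ)).card := Finset.card_le_card this
    _ = 1 := rfl

lemma Pairs_one_card : (Pairs 1).card ≤ 3 := by
  have : Pairs 1 ⊆ {(0, 0), (1, 0), (0, 1)} := by
    intro p hp
    have h := mem_Pairs.mp hp
    have hb := lessdot_le h
    have h0 := h 0
    simp only [Nat.testBit_zero] at h0
    have e1 : p.1 = 0 ∨ p.1 = 1 := by omega
    have e2 : p.2 = 0 ∨ p.2 = 1 := by omega
    have : ¬(p.1 = 1 ∧ p.2 = 1) := by
      rintro ⟨a1, a2⟩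
      rw [a1, a2] at h0
      simp at h0
    simp only [Finset.mem_insert, Finset.mem_singleton]
    rcases e1 with e1 | e1 <;> rcases e2 with e2 | e2 <;>
      simp_all [Prod.ext_iff]
  calc (Pairs 1).card ≤ ({(0,0), (1,0), (0,1)} : Finset (ℕ × ℕ)).card :=
        Finset.card_le_card this
    _ ≤ 3 := by decide

lemma Pairs_sum_le (k : ℕ) : ∑ s ∈ Finset.range (2 ^ k), (Pairs s).card ≤ 4 ^ k := by
  induction k with
  | zero => simpa using Pairs_zero_card
  | succ k ih =>
    have h := sum_pow_le (fun s => (Pairs s).card)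
      (fun u v b hv => Pairs_card_mul hv) k 1
    have h2 : ∑ s ∈ Finset.range (2 ^ 1), (Pairs s).card ≤ 4 := by
      rw [show (2:ℕ)^1 = 2 by norm_num, Finset.sum_range_succ, Finset.sum_range_one]
      have := Pairs_zero_card
      have := Pairs_one_card
      omega
    calc ∑ s ∈ Finset.range (2 ^ (k + 1)), (Pairs s).card
        ≤ (∑ s ∈ Finset.range (2 ^ k), (Pairs s).card) *
          (∑ s ∈ Finset.range (2 ^ 1), (Pairs s).card) := h
      _ ≤ 4 ^ k * 4 := Nat.mul_le_mul ih h2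
      _ = 4 ^ (k + 1) := by rw [pow_succ]

lemma BSet_card_le_Pairs (r s : ℕ) : (BSet r s).card ≤ (Pairs s).card := by
  rw [BSet_eq]; exact Finset.card_image_le

lemma Nnum_add (r a b : ℕ) : Nnum r (a + b) ≤ Nnum r a * Nnum r b :=
  sum_pow_le (fun s => (BSet r s).card) (fun u v b hv => BSet_card_mul r hv) a b

lemma Nnum_le_four_pow (r t : ℕ) : Nnum r t ≤ 4 ^ t := by
  calc Nnum r t ≤ ∑ s ∈ Finset.range (2 ^ t), (Pairs s).card :=
      Finset.sum_le_sum fun s _ => BSet_card_le_Pairs r s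
    _ ≤ 4 ^ t := Pairs_sum_le t

/-- bits of `x - 1` for odd `x`. -/
lemma testBit_sub_one_odd {x : ℕ} (hx : x % 2 = 1) (i : ℕ) :
    (x - 1).testBit i = (decide (i ≠ 0) && x.testBit i) := by
  have e : x - 1 = 2 * (x / 2) := by omega
  cases i with
  | zero =>
    rw [e, Nat.testBit_zero]
    simp [Nat.mul_mod_right]
  | succ j =>
    rw [e, Nat.testBit_add_one, Nat.mul_div_cancel_left _ (by norm_num : (0:ℕ) < 2),
      ← Nat.testBit_div_two]
    simp

/-- `x % 2^(r+1) < 2^r` when bit `r` of `x` is clear. -/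
lemma mod_lt_of_testBit_false {x r : ℕ} (hx : x.testBit r = false) :
    x % 2 ^ (r + 1) < 2 ^ r := by
  set b := x % 2 ^ (r + 1) with hb
  have hlt : b < 2 ^ (r + 1) := Nat.mod_lt _ (Nat.two_pow_pos _)
  by_contra hge
  push_neg at hge
  have hp : (2:ℕ) ^ (r + 1) = 2 ^ r * 2 := pow_succ 2 r
  have h1 : b / 2 ^ r = 1 := Nat.div_eq_of_lt_le (by omega) (by omega)
  have : b.testBit r = true := by
    rw [Nat.testBit_eq_decide_div_mod_eq, h1]
    decide
  have hbr : b.testBit r = x.testBit r := by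
    rw [hb, Nat.testBit_mod_two_pow]
    simp
  rw [hbr, hx] at this
  exact absurd this (by simp)

lemma testBit_add_pow {x r : ℕ} (hx : x.testBit r = false) (i : ℕ) :
    (x + 2 ^ r).testBit i = (x.testBit i || decide (i = r)) := by
  rcases lt_trichotomy i r with hi | rfl | hi
  · rw [add_comm, Nat.testBit_two_pow_add_gt hi]
    simp [Nat.ne_of_lt hi]
  · rw [add_comm, Nat.testBit_two_pow_add_eq, hx]
    simp
  · -- i > r : show high bits unchanged
    have hq : (x + 2 ^ r) / 2 ^ (r + 1) = x / 2 ^ (r + 1) := by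
      have hm := mod_lt_of_testBit_false hx
      have hdm := Nat.div_add_mod x (2 ^ (r + 1))
      have e : x + 2 ^ r = 2 ^ (r + 1) * (x / 2 ^ (r + 1)) + (x % 2 ^ (r + 1) + 2 ^ r) := by
        rw [← add_assoc, hdm]
      have hp : (2:ℕ) ^ (r + 1) = 2 ^ r * 2 := pow_succ 2 r
      have e2 : (x % 2 ^ (r + 1) + 2 ^ r) / 2 ^ (r + 1) = 0 := Nat.div_eq_of_lt (by omega)
      rw [e, Nat.mul_add_div (Nat.two_pow_pos _), e2, Nat.add_zero]
    obtain ⟨j, rfl⟩ := Nat.exists_eq_add_of_le (Nat.succ_le_of_lt hi)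
    have e1 : (x + 2 ^ r).testBit (r + 1 + j) = ((x + 2 ^ r) / 2 ^ (r + 1)).testBit j := by
      rw [testBit_div_pow]
    rw [e1, hq, testBit_div_pow]
    simp [show r + 1 + j ≠ r by omega]



lemma reconstruct {r : ℕ} (hr : 1 ≤ r) {x : ℕ} (hx : x < 2 ^ (r + 1)) :
    x = (x.testBit 0).toNat + 2 * (x / 2 % 2 ^ (r - 1)) + 2 ^ r * (x.testBit r).toNat := by
  have hp : (2:ℕ) ^ r = 2 ^ (r - 1) * 2 := by
    rw [← pow_succ]; congr 1; omega
  have e1 := Nat.div_add_mod x 2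
  have e3 : x / 2 / 2 ^ (r - 1) = x / 2 ^ r := by
    rw [Nat.div_div_eq_div_mul, mul_comm, ← hp]
  have e2 := Nat.div_add_mod (x / 2) (2 ^ (r - 1))
  rw [e3] at e2
  have e4 : x / 2 ^ r ≤ 1 := by
    have h2 : x / 2 ^ r < 2 := by
      apply Nat.div_lt_of_lt_mul
      rw [← pow_succ]
      exact hx
    omega
  have b0 : (x.testBit 0).toNat = x % 2 := by
    rw [Nat.testBit_zero]
    rcases Nat.mod_two_eq_zero_or_one x with h | h <;> simp [h]
  have e4' : x / 2 ^ r = 0 ∨ x / 2 ^ r = 1 := Nat.le_one_iff_eq_zero_or_eq_one.mp e4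
  have br : (x.testBit r).toNat = x / 2 ^ r := by
    rcases e4' with h | h <;> rw [Nat.testBit_eq_decide_div_mod_eq, h] <;> decide
  set A := x / 2 % 2 ^ (r - 1) with hA
  rw [b0, br]
  rcases e4' with h | h <;> rw [h] at e2 ⊢ <;> omega

def Tset : Finset (Bool × Bool × Bool × Bool) :=
  {(false,false,false,false),(false,false,true,false),(false,false,false,true),
   (true,false,true,false),(true,false,false,true),
   (false,true,false,false),(false,true,true,false),(false,true,false,true)}

lemma Tset_card : Tset.card ≤ 8 := by decide

lemma combo_mem {a₁ a₂ b₁ b₂ : Bool} (h0 : a₁.toNat + a₂.toNat ≤ 1)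
    (hrr : b₁.toNat + b₂.toNat ≤ 1)
    (hA : ¬(a₁ = true ∧ a₂ = false ∧ b₁ = false ∧ b₂ = false)) :
    (a₁, a₂, b₁, b₂) ∈ Tset := by
  revert h0 hrr hA
  cases a₁ <;> cases a₂ <;> cases b₁ <;> cases b₂ <;> decide

lemma card_B_corner {r : ℕ} (hr : 1 ≤ r) {mid : ℕ} (hmid : mid < 2 ^ (r - 1)) :
    (BSet r (2 ^ r + (2 * mid + 1))).card ≤ 8 * (Pairs mid).card := by
  classical
  set s := 2 ^ r + (2 * mid + 1) with hs
  have hp : (2:ℕ) ^ r = 2 ^ (r - 1) * 2 := by rw [← pow_succ]; congr 1; omega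
  have hslt : s < 2 ^ (r + 1) := by rw [pow_succ]; omega
  have s0 : s.testBit 0 = true := by
    have h2 : s % 2 = 1 := by omega
    rw [Nat.testBit_zero, h2]
    decide
  have sdiv2 : s / 2 = 2 ^ (r - 1) + mid := by omega
  have sr : s.testBit r = true := by
    have h1 : s / 2 ^ r = 1 := Nat.div_eq_of_lt_le (by omega) (by omega)
    rw [Nat.testBit_eq_decide_div_mod_eq, h1]
    decide
  have smid : ∀ i, i < r - 1 → s.testBit (i + 1) = mid.testBit i := by
    intro i hi
    rw [← Nat.testBit_div_two, sdiv2, Nat.testBit_two_pow_add_gt hi]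
  set Good := (Pairs s).filter
    (fun p => ¬(p.1.testBit 0 = true ∧ p.2.testBit 0 = false ∧
      p.1.testBit r = false ∧ p.2.testBit r = false)) with hGood
  have hsub : BSet r s ⊆ Good.image (fun p => 2 ^ r * p.1 + p.2) := by
    intro n hn
    obtain ⟨l₁, l₂, h, rfl⟩ := mem_BSet.mp hn
    rw [Finset.mem_image]
    by_cases hA : l₁.testBit 0 = true ∧ l₂.testBit 0 = false ∧
        l₁.testBit r = false ∧ l₂.testBit r = false
    · obtain ⟨a1, a2, a3, a4⟩ := hA
      have hodd : l₁ % 2 = 1 := by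
        rw [Nat.testBit_zero] at a1
        exact of_decide_eq_true a1
      refine ⟨(l₁ - 1, l₂ + 2 ^ r), ?_, ?_⟩
      · rw [hGood, Finset.mem_filter]
        refine ⟨mem_Pairs.mpr ?_, ?_⟩
        · intro i
          simp only
          rw [testBit_sub_one_odd hodd, testBit_add_pow a4]
          by_cases h0 : i = 0
          · subst h0
            have hfst : (decide ((0:ℕ) ≠ 0) && l₁.testBit 0) = false := by simp
            rw [hfst, a2, s0]
            simp only [Bool.toNat_false, Bool.false_or, Nat.zero_add, Bool.toNat_true]
            exact Bool.toNat_le _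
          · by_cases hir : i = r
            · subst hir
              simp [a3, sr]
            · simpa [h0, hir] using h i
        · simp [testBit_sub_one_odd hodd]
      · simp only
        obtain ⟨k, rfl⟩ : ∃ k, l₁ = k + 1 := ⟨l₁ - 1, by omega⟩
        simp only [Nat.add_sub_cancel]
        ring
    · exact ⟨(l₁, l₂), by rw [hGood, Finset.mem_filter]; exact ⟨mem_Pairs.mpr h, hA⟩, rfl⟩
  have hinj : Good.card ≤ (Tset ×ˢ (Pairs mid)).card := by
    apply Finset.card_le_card_of_injOn
      (fun p => ((p.1.testBit 0, p.2.testBit 0, p.1.testBit r, p.2.testBit r),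
                 (p.1 / 2 % 2 ^ (r - 1), p.2 / 2 % 2 ^ (r - 1))))
    · intro p hp
      simp only [Finset.mem_coe, hGood, Finset.mem_filter] at hp
      obtain ⟨hp1, hp2⟩ := hp
      have h := mem_Pairs.mp hp1
      rw [Finset.mem_coe, Finset.mem_product]
      constructor
      · have h0 := h 0
        rw [s0] at h0
        have hrr := h r
        rw [sr] at hrr
        exact combo_mem (by simpa using h0) (by simpa using hrr) hp2
      · rw [mem_Pairs]
        intro i
        simp only
        rw [Nat.testBit_mod_two_pow, Nat.testBit_mod_two_pow]
        by_cases hi : i < r - 1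
        · simp only [hi, decide_true, Bool.true_and]
          rw [Nat.testBit_div_two, Nat.testBit_div_two, ← smid i hi]
          exact h (i + 1)
        · simp [hi]
    · intro p hp q hq hpq
      simp only [Prod.mk.injEq] at hpq
      obtain ⟨⟨c1, c2, c3, c4⟩, d1, d2⟩ := hpq
      simp only [hGood, Finset.mem_coe, Finset.mem_filter] at hp hq
      have hp' := mem_Pairs.mp hp.1
      have hq' := mem_Pairs.mp hq.1
      have hx1 : p.1 < 2 ^ (r + 1) := lt_of_le_of_lt (lessdot_le hp').1 hslt
      have hx2 : q.1 < 2 ^ (r + 1) := lt_of_le_of_lt (lessdot_le hq').1 hslt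
      have hx3 : p.2 < 2 ^ (r + 1) := lt_of_le_of_lt (lessdot_le hp').2 hslt
      have hx4 : q.2 < 2 ^ (r + 1) := lt_of_le_of_lt (lessdot_le hq').2 hslt
      have e1 : p.1 = q.1 :=
        calc p.1 = (p.1.testBit 0).toNat + 2 * (p.1 / 2 % 2 ^ (r - 1)) +
              2 ^ r * (p.1.testBit r).toNat := reconstruct hr hx1
          _ = (q.1.testBit 0).toNat + 2 * (q.1 / 2 % 2 ^ (r - 1)) +
              2 ^ r * (q.1.testBit r).toNat := by rw [c1, c3, d1]
          _ = q.1 := (reconstruct hr hx2).symm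
      have e2 : p.2 = q.2 :=
        calc p.2 = (p.2.testBit 0).toNat + 2 * (p.2 / 2 % 2 ^ (r - 1)) +
              2 ^ r * (p.2.testBit r).toNat := reconstruct hr hx3
          _ = (q.2.testBit 0).toNat + 2 * (q.2 / 2 % 2 ^ (r - 1)) +
              2 ^ r * (q.2.testBit r).toNat := by rw [c2, c4, d2]
          _ = q.2 := (reconstruct hr hx4).symm
      exact Prod.ext e1 e2
  calc (BSet r s).card ≤ (Good.image (fun p => 2 ^ r * p.1 + p.2)).card :=
        Finset.card_le_card hsub
    _ ≤ Good.card := Finset.card_image_le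
    _ ≤ (Tset ×ˢ (Pairs mid)).card := hinj
    _ = Tset.card * (Pairs mid).card := Finset.card_product _ _
    _ ≤ 8 * (Pairs mid).card := Nat.mul_le_mul_right _ Tset_card



lemma Nnum_base {r : ℕ} (hr : 1 ≤ r) : Nnum r (r + 1) ≤ 15 * 4 ^ (r - 1) := by
  have hp : (2:ℕ) ^ r = 2 ^ (r - 1) * 2 := by rw [← pow_succ]; congr 1; omega
  have split2 : ∀ g : ℕ → ℕ, ∑ v ∈ Finset.range (2 ^ r), g v =
      ∑ mid ∈ Finset.range (2 ^ (r - 1)), (g (mid * 2) + g (mid * 2 + 1)) := by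
    intro g
    have h := sum_range_pow_split g (r - 1) 1
    rw [show r - 1 + 1 = r by omega] at h
    rw [h]
    refine Finset.sum_congr rfl fun mid _ => ?_
    rw [show (2:ℕ) ^ 1 = 2 from rfl, Finset.sum_range_succ, Finset.sum_range_one,
      Nat.add_zero]
  unfold Nnum
  rw [show r + 1 = 1 + r by omega, sum_range_pow_split _ 1 r,
    show (2:ℕ) ^ 1 = 2 from rfl, Finset.sum_range_succ, Finset.sum_range_one]
  simp only [zero_mul, one_mul, zero_add]
  rw [split2, split2, ← Finset.sum_add_distrib]
  have key : ∀ mid ∈ Finset.range (2 ^ (r - 1)),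
      ((BSet r (mid * 2)).card + (BSet r (mid * 2 + 1)).card) +
        ((BSet r (2 ^ r + mid * 2)).card + (BSet r (2 ^ r + (mid * 2 + 1))).card) ≤
      15 * (Pairs mid).card := by
    intro mid hmid
    rw [Finset.mem_range] at hmid
    have pa : (Pairs (mid * 2)).card ≤ (Pairs mid).card := by
      have h := Pairs_card_mul (u := mid) (b := 1) (v := 0) (by norm_num)
      rw [pow_one, Nat.add_zero] at h
      calc (Pairs (mid * 2)).card ≤ (Pairs mid).card * (Pairs 0).card := h
        _ ≤ (Pairs mid).card * 1 := Nat.mul_le_mul_left _ Pairs_zero_card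
        _ = (Pairs mid).card := mul_one _
    have ka : (BSet r (mid * 2)).card ≤ (Pairs mid).card :=
      (BSet_card_le_Pairs _ _).trans pa
    have kb : (BSet r (mid * 2 + 1)).card ≤ 3 * (Pairs mid).card := by
      have h := Pairs_card_mul (u := mid) (b := 1) (v := 1) (by norm_num)
      rw [pow_one] at h
      calc (BSet r (mid * 2 + 1)).card ≤ (Pairs (mid * 2 + 1)).card :=
          BSet_card_le_Pairs _ _
        _ ≤ (Pairs mid).card * (Pairs 1).card := h
        _ ≤ (Pairs mid).card * 3 := Nat.mul_le_mul_left _ Pairs_one_card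
        _ = 3 * (Pairs mid).card := mul_comm _ _
    have kc : (BSet r (2 ^ r + mid * 2)).card ≤ 3 * (Pairs mid).card := by
      have hv : mid * 2 < 2 ^ r := by omega
      have h := Pairs_card_mul (u := 1) (b := r) (v := mid * 2) hv
      rw [one_mul] at h
      calc (BSet r (2 ^ r + mid * 2)).card ≤ (Pairs (2 ^ r + mid * 2)).card :=
          BSet_card_le_Pairs _ _
        _ ≤ (Pairs 1).card * (Pairs (mid * 2)).card := h
        _ ≤ 3 * (Pairs mid).card := Nat.mul_le_mul Pairs_one_card pa
    have kd : (BSet r (2 ^ r + (mid * 2 + 1))).card ≤ 8 * (Pairs mid).card := by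
      have h := card_B_corner hr hmid
      rwa [show 2 * mid = mid * 2 from mul_comm _ _] at h
    omega
  calc ∑ mid ∈ Finset.range (2 ^ (r - 1)), _ ≤
      ∑ mid ∈ Finset.range (2 ^ (r - 1)), 15 * (Pairs mid).card :=
        Finset.sum_le_sum key
    _ = 15 * ∑ mid ∈ Finset.range (2 ^ (r - 1)), (Pairs mid).card := by
        rw [Finset.mul_sum]
    _ ≤ 15 * 4 ^ (r - 1) := Nat.mul_le_mul_left _ (Pairs_sum_le _)

lemma Nnum_main {r : ℕ} (hr : 1 ≤ r) (k t : ℕ) :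
    Nnum r ((r + 1) * k + t) ≤ (15 * 4 ^ (r - 1)) ^ k * 4 ^ t := by
  induction k with
  | zero => simpa using Nnum_le_four_pow r t
  | succ k ih =>
    have e : (r + 1) * (k + 1) + t = (r + 1) + ((r + 1) * k + t) := by ring
    rw [e]
    calc Nnum r ((r + 1) + ((r + 1) * k + t)) ≤
        Nnum r (r + 1) * Nnum r ((r + 1) * k + t) := Nnum_add r _ _
      _ ≤ (15 * 4 ^ (r - 1)) * ((15 * 4 ^ (r - 1)) ^ k * 4 ^ t) :=
          Nat.mul_le_mul (Nnum_base hr) ih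
      _ = (15 * 4 ^ (r - 1)) ^ (k + 1) * 4 ^ t := by ring

end Stmt17

/-- For `r ≥ 1` and `m ≥ 0`,
`N_m^{(r)} ≤ (15/16)^{⌊m/(r+1)⌋} · 4^m` as real numbers. -/
theorem stmt_17 (r m : ℕ) (hr : 1 ≤ r) :
    (Nnum r m : ℝ) ≤ ((15 : ℝ) / 16) ^ (m / (r + 1)) * 4 ^ m := by
  obtain ⟨r', rfl⟩ : ∃ r', r = r' + 1 := ⟨r - 1, by omega⟩
  set q := m / (r' + 1 + 1) with hq
  set t := m % (r' + 1 + 1) with ht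
  have hm : (r' + 1 + 1) * q + t = m := Nat.div_add_mod m (r' + 1 + 1)
  have h1 : Nnum (r' + 1) m ≤ (15 * 4 ^ r') ^ q * 4 ^ t := by
    have := Stmt17.Nnum_main (r := r' + 1) (by omega) q t
    simpa [hm] using this
  have h2 : (((15 * 4 ^ r') ^ q * 4 ^ t : ℕ) : ℝ) = (15 / 16) ^ q * 4 ^ m := by
    push_cast
    have e16 : ((16:ℝ)) ^ q = 4 ^ (2 * q) := by
      rw [pow_mul]; norm_num
    have e4 : (4:ℝ) ^ m = 4 ^ (r' * q) * 4 ^ (2 * q) * 4 ^ t := by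
      rw [← pow_add, ← pow_add]
      congr 1
      rw [← hm]; ring
    rw [mul_pow, div_pow, e16, e4, ← pow_mul]
    have h40 : (4:ℝ) ^ (2 * q) ≠ 0 := by positivity
    field_simp
  calc (Nnum (r' + 1) m : ℝ) ≤ (((15 * 4 ^ r') ^ q * 4 ^ t : ℕ) : ℝ) :=
      Nat.cast_le.mpr h1
    _ = (15 / 16) ^ q * 4 ^ m := h2
end
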